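/- arXiv:1210.5869 — 5 statements merged into one kernel-verified Lean document; each statement's English description precedes it below -/
import Mathlib

section
/- A composition c = (c_1,…,c_k) of n ≥ 1 satisfies P(c) > 0 (i.e., there exists a permutation of [n] with peak set S(c)) if and only if k = 1, or c_i ≥ 2 for all 1 ≤ i ≤ k−1 and c_k ≥ 1. -/
/-- `i` (1-based, with `1 < i < n`) is a peak of the permutation `σ` of `{1,…,n}`
(represented as a permutation of `Fin n`, position `j` (1-based) being index `j-1`). -/
def IsPeak {n : ℕ} (σ : Equiv.Perm (Fin n)) (i : ℕ) : Prop :=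
  ∃ (h₂ : 2 ≤ i) (h₃ : i < n),
    σ ⟨i - 2, by omega⟩ < σ ⟨i - 1, by omega⟩ ∧ σ ⟨i, h₃⟩ < σ ⟨i - 1, by omega⟩

open Classical in
/-- The peak set of a permutation of `{1,…,n}` (as a set of 1-based positions). -/
noncomputable def peakSet {n : ℕ} (σ : Equiv.Perm (Fin n)) : Finset ℕ :=
  (Finset.range n).filter (fun i => IsPeak σ i)

/-- `P(S;n)`: the number of permutations of `{1,…,n}` with peak set `S`. -/
noncomputable def numPeakSet (n : ℕ) (S : Finset ℕ) : ℕ :=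
  Nat.card {σ : Equiv.Perm (Fin n) // peakSet σ = S}

/-- `c` is a composition of `n`: a list of positive integers summing to `n`. -/
def IsComposition (n : ℕ) (c : List ℕ) : Prop :=
  (∀ x ∈ c, 0 < x) ∧ c.sum = n

/-- The set `S(c)` of proper partial sums of the composition `c`. -/
def compPeaks (c : List ℕ) : Finset ℕ :=
  (Finset.range (c.length - 1)).image (fun i => (c.take (i + 1)).sum)

/-- `P(c)`: the number of permutations of `{1,…,|c|}` whose peak set is `S(c)`. -/
noncomputable def Pcomp (c : List ℕ) : ℕ :=
  numPeakSet c.sum (compPeaks c)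

/-- A composition is maximal if `P(b) ≤ P(c)` for every composition `b` of the same size. -/
def IsMaximal (c : List ℕ) : Prop :=
  ∀ b : List ℕ, IsComposition c.sum b → Pcomp b ≤ Pcomp c

/-!
A permutation has no peak at positions `1` or `n`, and no two adjacent peaks, since a peak at `i`
forces `σ(i) < σ(i-1)` while a peak at `i+1` forces the opposite. Conversely every set
`S ⊆ [2, n-1]` without adjacent elements is a peak set: swapping the entries in positions `s` and
`s + 1` of the identity, for each `s ∈ S`, creates exactly the peaks in `S`. For a composition `c`
with positive parts, `S(c)` avoids `1` and `n` and has no adjacent elements exactly when every part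
but the last is at least `2`.
-/

section Peaks

variable {n : ℕ}

def IsAdmissiblePeakSet (n : ℕ) (S : Finset ℕ) : Prop :=
  (∀ s ∈ S, 2 ≤ s ∧ s < n) ∧ ∀ s ∈ S, s + 1 ∉ S

theorem mem_peakSet {σ : Equiv.Perm (Fin n)} {i : ℕ} : i ∈ peakSet σ ↔ IsPeak σ i := by
  simp only [peakSet, Finset.mem_filter, Finset.mem_range, and_iff_right_iff_imp]
  exact fun ⟨_, hi, _⟩ => hi

theorem isPeak_add_two_iff {σ : Equiv.Perm (Fin n)} {k : ℕ} (hk : k + 2 < n) :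
    IsPeak σ (k + 2) ↔
      σ ⟨k, by omega⟩ < σ ⟨k + 1, by omega⟩ ∧ σ ⟨k + 2, hk⟩ < σ ⟨k + 1, by omega⟩ := by
  simp [IsPeak, hk]

theorem IsPeak.two_le_and_lt {σ : Equiv.Perm (Fin n)} {i : ℕ} (h : IsPeak σ i) : 2 ≤ i ∧ i < n :=
  ⟨h.1, h.2.1⟩

theorem IsPeak.not_isPeak_add_one {σ : Equiv.Perm (Fin n)} {i : ℕ} (h : IsPeak σ i) :
    ¬IsPeak σ (i + 1) := by
  obtain ⟨k, rfl⟩ : ∃ k, i = k + 2 := ⟨i - 2, by have := h.1; omega⟩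
  intro h'
  have hk := h'.2.1
  rw [isPeak_add_two_iff (by omega)] at h
  rw [isPeak_add_two_iff hk] at h'
  exact lt_asymm h.2 h'.1

theorem isAdmissiblePeakSet_peakSet (σ : Equiv.Perm (Fin n)) :
    IsAdmissiblePeakSet n (peakSet σ) := by
  simp only [IsAdmissiblePeakSet, mem_peakSet]
  exact ⟨fun _ h => h.two_le_and_lt, fun _ h => h.not_isPeak_add_one⟩

/-- Acting on 0-based indices, this swaps the entries in the 1-based positions `s` and `s + 1` for
every `s ∈ S`. -/
def peakSwap (S : Finset ℕ) (m : ℕ) : ℕ :=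
  if m + 1 ∈ S then m + 1 else if m ∈ S then m - 1 else m

variable {S : Finset ℕ}

theorem peakSwap_involutive (hS : ∀ s ∈ S, s + 1 ∉ S) : Function.Involutive (peakSwap S) := by
  intro m
  by_cases hm : m + 1 ∈ S
  · simp [peakSwap, hm, hS _ hm]
  by_cases hm' : m ∈ S
  · cases m <;> simp [peakSwap, hm, hm']
  · simp [peakSwap, hm, hm']

theorem peakSwap_lt (hS : ∀ s ∈ S, s < n) {m : ℕ} (hm : m < n) : peakSwap S m < n := by
  unfold peakSwap
  split_ifs with h
  · exact hS _ h
  all_goals omega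

theorem peakSwap_peak_iff (hS : ∀ s ∈ S, s + 1 ∉ S) (k : ℕ) :
    peakSwap S k < peakSwap S (k + 1) ∧ peakSwap S (k + 2) < peakSwap S (k + 1) ↔ k + 2 ∈ S := by
  have := hS k
  have := hS (k + 1)
  have := hS (k + 2)
  unfold peakSwap
  split_ifs <;> simp_all; omega

def peakSwapPerm (hS : IsAdmissiblePeakSet n S) : Equiv.Perm (Fin n) :=
  Function.Involutive.toPerm (fun m => ⟨peakSwap S m, peakSwap_lt (fun s hs => (hS.1 s hs).2) m.2⟩)
    fun m => Fin.ext (peakSwap_involutive hS.2 m)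

theorem peakSet_peakSwapPerm (hS : IsAdmissiblePeakSet n S) : peakSet (peakSwapPerm hS) = S := by
  ext i
  rw [mem_peakSet]
  by_cases hi : 2 ≤ i ∧ i < n
  · obtain ⟨k, rfl⟩ : ∃ k, i = k + 2 := ⟨i - 2, by omega⟩
    rw [isPeak_add_two_iff hi.2, ← peakSwap_peak_iff hS.2]
    rfl
  · exact iff_of_false (fun h => hi h.two_le_and_lt) fun h => hi (hS.1 i h)

theorem exists_peakSet_eq_iff :
    (∃ σ : Equiv.Perm (Fin n), peakSet σ = S) ↔ IsAdmissiblePeakSet n S :=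
  ⟨fun ⟨σ, hσ⟩ => hσ ▸ isAdmissiblePeakSet_peakSet σ,
    fun hS => ⟨peakSwapPerm hS, peakSet_peakSwapPerm hS⟩⟩

theorem numPeakSet_pos_iff : 0 < numPeakSet n S ↔ IsAdmissiblePeakSet n S := by
  rw [numPeakSet, Nat.card_pos_iff, ← exists_peakSet_eq_iff]
  simp [nonempty_subtype, Finite.of_fintype]

end Peaks

section Compositions

variable {l : List ℕ}

theorem mem_compPeaks {s : ℕ} :
    s ∈ compPeaks l ↔ ∃ j, j + 1 < l.length ∧ (l.take (j + 1)).sum = s := by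
  simp [compPeaks, Nat.lt_sub_iff_add_lt]

theorem sum_take_lt_sum (hpos : ∀ x ∈ l, 0 < x) {j : ℕ} (hj : j < l.length) :
    (l.take j).sum < l.sum := by
  rw [← List.sum_take_add_sum_drop l j, List.drop_eq_getElem_cons hj, List.sum_cons]
  have := hpos _ (List.getElem_mem hj)
  omega

theorem sum_take_add_getElem_le {j k : ℕ} (hjk : j < k) (hj : j < l.length) :
    (l.take j).sum + l[j] ≤ (l.take k).sum :=
  List.sum_take_succ l j hj ▸ List.monotone_sum_take l hjk

theorem two_le_getD_of_isAdmissiblePeakSet (hpos : ∀ x ∈ l, 0 < x)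
    (hS : IsAdmissiblePeakSet l.sum (compPeaks l)) {i : ℕ} (hi : i + 1 < l.length) :
    2 ≤ l.getD i 0 := by
  rw [List.getD_eq_getElem _ _ (by omega)]
  rcases i with _ | i
  · have := (hS.1 _ (mem_compPeaks.2 ⟨0, hi, rfl⟩)).1
    rwa [List.sum_take_succ _ _ (by omega), List.take_zero, List.sum_nil, zero_add] at this
  · by_contra hlt
    have hone : l[i + 1] = 1 := by
      have := hpos _ (List.getElem_mem (show i + 1 < l.length by omega))
      omega
    refine hS.2 _ (mem_compPeaks.2 ⟨i, by omega, rfl⟩) (mem_compPeaks.2 ⟨i + 1, hi, ?_⟩)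
    rw [List.sum_take_succ _ _ (by omega), hone]

theorem isAdmissiblePeakSet_compPeaks_of_two_le (hpos : ∀ x ∈ l, 0 < x)
    (h : ∀ i, i + 1 < l.length → 2 ≤ l.getD i 0) :
    IsAdmissiblePeakSet l.sum (compPeaks l) := by
  have h' : ∀ i (hi : i + 1 < l.length), 2 ≤ l[i] := fun i hi =>
    List.getD_eq_getElem l 0 (show i < l.length by omega) ▸ h i hi
  simp only [IsAdmissiblePeakSet, mem_compPeaks]
  constructor
  · rintro _ ⟨j, hj, rfl⟩
    refine ⟨?_, sum_take_lt_sum hpos hj⟩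
    calc 2 ≤ l[0] := h' 0 (by omega)
      _ ≤ (l.take (j + 1)).sum := by
        simpa using sum_take_add_getElem_le (Nat.succ_pos j) (show 0 < l.length by omega)
  · rintro _ ⟨j, hj, rfl⟩ ⟨j', hj', heq⟩
    rcases le_or_gt j' j with hle | hlt
    · have : (l.take (j' + 1)).sum ≤ (l.take (j + 1)).sum :=
        List.monotone_sum_take l (show j' + 1 ≤ j + 1 by omega)
      omega
    · have := sum_take_add_getElem_le (show j + 1 < j' + 1 by omega) hj
      have := h' (j + 1) (by omega)
      omega

theorem isAdmissiblePeakSet_compPeaks_iff (hpos : ∀ x ∈ l, 0 < x) :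
    IsAdmissiblePeakSet l.sum (compPeaks l) ↔ ∀ i, i + 1 < l.length → 2 ≤ l.getD i 0 :=
  ⟨fun hS _ hi => two_le_getD_of_isAdmissiblePeakSet hpos hS hi,
    isAdmissiblePeakSet_compPeaks_of_two_le hpos⟩

end Compositions

theorem admissible_iff (n : ℕ) (hn : 1 ≤ n) (c : List ℕ) (hc : IsComposition n c) :
    0 < Pcomp c ↔
      c.length = 1 ∨
        ((∀ i, i + 1 < c.length → 2 ≤ c.getD i 0) ∧ 1 ≤ c.getD (c.length - 1) 0) := by
  obtain ⟨hpos, rfl⟩ := hc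
  have hlen : 0 < c.length := List.length_pos_iff.2 (by rintro rfl; simp at hn)
  have hlast : 1 ≤ c.getD (c.length - 1) 0 := by
    rw [List.getD_eq_getElem _ _ (by omega)]
    exact hpos _ (List.getElem_mem _)
  rw [Pcomp, numPeakSet_pos_iff, isAdmissiblePeakSet_compPeaks_iff hpos]
  constructor
  · exact fun h => Or.inr ⟨h, hlast⟩
  · rintro (hone | ⟨h, -⟩)
    · exact fun i hi => by omega
    · exact h
end

section
/- Let c = (c_1,…,c_k) be a composition of n with k ≥ 2 and c_1 ≥ 2, so that r'c := (c_k+1, c_{k−1}, c_{k−2}, …, c_2, c_1−1) is again a composition of n. Then P(c) = P(r'c). -/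
lemma trans_rev_apply {n : ℕ} (σ : Equiv.Perm (Fin n)) (x : ℕ) (hx : x < n) :
    (Fin.revPerm.trans σ) ⟨x, hx⟩ = σ ⟨n - 1 - x, by omega⟩ := by
  simp only [Equiv.trans_apply, Fin.revPerm_apply]
  congr 1
  apply Fin.ext
  simp [Fin.val_rev]
  omega

lemma isPeak_rev {n : ℕ} (σ : Equiv.Perm (Fin n)) (i : ℕ) :
    IsPeak (Fin.revPerm.trans σ) i ↔ IsPeak σ (n + 1 - i) := by
  constructor
  · rintro ⟨h2, h3, ha, hb⟩
    refine ⟨by omega, by omega, ?_, ?_⟩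
    · rw [trans_rev_apply, trans_rev_apply] at hb
      convert hb using 3 <;> omega
    · rw [trans_rev_apply, trans_rev_apply] at ha
      convert ha using 3 <;> omega
  · rintro ⟨h2, h3, ha, hb⟩
    have hi2 : 2 ≤ i := by omega
    have hin : i < n := by omega
    refine ⟨hi2, hin, ?_, ?_⟩
    · rw [trans_rev_apply, trans_rev_apply]
      convert hb using 3 <;> omega
    · rw [trans_rev_apply, trans_rev_apply]
      convert ha using 3 <;> omega

lemma peakSet_rev {n : ℕ} (σ : Equiv.Perm (Fin n)) :
    peakSet (Fin.revPerm.trans σ) = (peakSet σ).image (fun s => n + 1 - s) := by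
  ext i
  simp only [peakSet, Finset.mem_filter, Finset.mem_image, Finset.mem_range]
  constructor
  · rintro ⟨hin, hp⟩
    rw [isPeak_rev] at hp
    obtain ⟨h2, h3, hcond⟩ := hp
    exact ⟨n + 1 - i, ⟨h3, ⟨h2, h3, hcond⟩⟩, by omega⟩
  · rintro ⟨s, ⟨hsn, hs⟩, rfl⟩
    obtain ⟨h2, h3, hcond⟩ := hs
    refine ⟨by omega, ?_⟩
    rw [isPeak_rev]
    have hss : n + 1 - (n + 1 - s) = s := by omega
    rw [hss]
    exact ⟨h2, h3, hcond⟩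

lemma image_ff {n : ℕ} (S : Finset ℕ) (hS : ∀ s ∈ S, s ≤ n + 1) :
    (S.image (fun s => n + 1 - s)).image (fun s => n + 1 - s) = S := by
  rw [Finset.image_image]
  have : S.image ((fun s => n + 1 - s) ∘ (fun s => n + 1 - s)) = S.image id := by
    apply Finset.image_congr
    intro s hs
    simp only [Function.comp_apply, id]
    have := hS s hs
    omega
  rw [this, Finset.image_id]

lemma peakSet_le {n : ℕ} (σ : Equiv.Perm (Fin n)) : ∀ s ∈ peakSet σ, s ≤ n + 1 := by
  intro s hs
  simp only [peakSet, Finset.mem_filter, Finset.mem_range] at hs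
  omega

lemma numPeakSet_rev (n : ℕ) (S : Finset ℕ) (hS : ∀ s ∈ S, s ≤ n + 1) :
    numPeakSet n S = numPeakSet n (S.image (fun s => n + 1 - s)) := by
  apply Nat.card_congr
  refine Equiv.subtypeEquiv (Equiv.mulRight Fin.revPerm) (fun σ => ?_)
  have hmul : σ * Fin.revPerm = Fin.revPerm.trans σ := rfl
  show peakSet σ = S ↔ peakSet (σ * Fin.revPerm) = _
  rw [hmul, peakSet_rev]
  constructor
  · rintro rfl; rfl
  · intro h
    have := congrArg (Finset.image (fun s => n + 1 - s)) h
    rwa [image_ff _ (peakSet_le σ), image_ff _ hS] at this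

lemma take_c' (a b : ℕ) (m : List ℕ) (j : ℕ) (hj : j ≤ m.length) :
    (((a+1) :: (m.reverse ++ [b-1])).take (j+1)).sum
      = (a+1) + (m.drop (m.length - j)).sum := by
  rw [List.take_succ_cons, List.sum_cons]
  rw [List.take_append_of_le_length (by simpa using hj)]
  rw [List.take_reverse, List.sum_reverse]

lemma take_c (a b : ℕ) (m : List ℕ) (i : ℕ) (hi : i ≤ m.length) :
    ((b :: (m ++ [a])).take (i+1)).sum = b + (m.take i).sum := by
  rw [List.take_succ_cons, List.sum_cons]
  rw [List.take_append_of_le_length hi]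

lemma compPeaks_rev (a b : ℕ) (m : List ℕ) :
    compPeaks ((a+1) :: (m.reverse ++ [b-1]))
      = (compPeaks (b :: (m ++ [a]))).image
          (fun s => (b :: (m ++ [a])).sum + 1 - s) := by
  have hn : (b :: (m ++ [a])).sum = b + (m.sum + a) := by simp
  ext x
  simp only [compPeaks, Finset.mem_image, Finset.mem_range]
  have hlen1 : ((a+1) :: (m.reverse ++ [b-1])).length - 1 = m.length + 1 := by simp
  have hlen2 : (b :: (m ++ [a])).length - 1 = m.length + 1 := by simp
  rw [hlen1, hlen2]
  have key : ∀ j ≤ m.length,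
      (((a+1) :: (m.reverse ++ [b-1])).take (j+1)).sum
        = (b :: (m ++ [a])).sum + 1 - ((b :: (m ++ [a])).take ((m.length - j)+1)).sum := by
    intro j hj
    rw [take_c' a b m j hj, take_c a b m _ (by omega), hn]
    have h2 := List.sum_take_add_sum_drop m (m.length - j)
    omega
  constructor
  · rintro ⟨j, hj, rfl⟩
    exact ⟨((b :: (m ++ [a])).take ((m.length - j)+1)).sum, ⟨m.length - j, by omega, rfl⟩,
      (key j (by omega)).symm⟩
  · rintro ⟨s, ⟨i, hi, rfl⟩, rfl⟩
    refine ⟨m.length - i, by omega, ?_⟩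
    rw [key _ (by omega)]
    have hii : m.length - (m.length - i) = i := by omega
    rw [hii]

lemma compPeaks_le (c : List ℕ) : ∀ s ∈ compPeaks c, s ≤ c.sum + 1 := by
  intro s hs
  simp only [compPeaks, Finset.mem_image, Finset.mem_range] at hs
  obtain ⟨i, hi, rfl⟩ := hs
  have := List.sum_take_add_sum_drop c (i + 1)
  omega

theorem Pcomp_reverse (n : ℕ) (c : List ℕ) (hc : IsComposition n c)
    (hk : 2 ≤ c.length) (h1 : 2 ≤ c.getD 0 0) :
    Pcomp c =
      Pcomp ((c.getD (c.length - 1) 0 + 1) ::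
        ((c.drop 1).dropLast.reverse ++ [c.getD 0 0 - 1])) := by
  obtain _ | ⟨b, t⟩ := c
  · simp at hk
  · have ht : t ≠ [] := by
      rintro rfl
      simp at hk
    obtain ⟨m, a, rfl⟩ : ∃ m a, t = m ++ [a] :=
      ⟨t.dropLast, t.getLast ht, (List.dropLast_append_getLast ht).symm⟩
    have hb : 2 ≤ b := by simpa using h1
    have hget0 : (b :: (m ++ [a])).getD 0 0 = b := rfl
    have hlen : (b :: (m ++ [a])).length - 1 = m.length + 1 := by simp
    have hgetl : (b :: (m ++ [a])).getD ((b :: (m ++ [a])).length - 1) 0 = a := by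
      rw [hlen, List.getD_cons_succ]
      have : m.length < (m ++ [a]).length := by simp
      rw [List.getD_eq_getElem _ _ this]
      simp
    have hdrop : ((b :: (m ++ [a])).drop 1).dropLast = m := by
      simp [List.dropLast_concat]
    rw [hget0, hgetl, hdrop]
    unfold Pcomp
    have hsum : ((a+1) :: (m.reverse ++ [b-1])).sum = (b :: (m ++ [a])).sum := by
      simp only [List.sum_cons, List.sum_append, List.sum_reverse]
      simp only [List.sum_cons, List.sum_nil]
      omega
    rw [hsum, compPeaks_rev a b m]
    exact numPeakSet_rev _ _ (compPeaks_le _)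
end

section
/- For every n ≥ 5, the number of permutations of [n] whose peak set equals {3} is (C(n−1,2) − 1)·2^{n−2}, where C(n−1,2) is the binomial coefficient (n−1 choose 2). -/
namespace PeakProof
open Equiv Fin

/-- no peak at any position `> k` -/
def NoPeakGT (k : ℕ) {m : ℕ} (σ : Equiv.Perm (Fin m)) : Prop :=
  ∀ i, k < i → ¬ IsPeak σ i

/-- the peak set is exactly `{j}` -/
def ExactPeak (j : ℕ) {m : ℕ} (σ : Equiv.Perm (Fin m)) : Prop :=
  IsPeak σ j ∧ ∀ i, IsPeak σ i → i = j

noncomputable def cnt (m : ℕ) (Q : Equiv.Perm (Fin m) → Prop) : ℕ :=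
  Nat.card {σ : Equiv.Perm (Fin m) // Q σ}

variable {n : ℕ}

/-- remove the position `p` (where the top value sits) from a permutation -/
def removeTopFun (p : Fin (n+1)) (σ : Equiv.Perm (Fin (n+1))) : Equiv.Perm (Fin n) :=
  Equiv.removeNone ((finSuccEquiv' p).symm.trans (σ.trans (finSuccEquiv' (Fin.last n))))

lemma removeTop_apply (p : Fin (n+1)) (σ : Equiv.Perm (Fin (n+1))) (hp : σ p = Fin.last n)
    (j : Fin n) :
    Fin.castSucc (removeTopFun p σ j) = σ (p.succAbove j) := by
  have hne : σ (p.succAbove j) ≠ Fin.last n := by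
    rw [← hp]; exact fun h => Fin.succAbove_ne p j (σ.injective h)
  have h2 : Fin.castSucc ((σ (p.succAbove j)).castPred hne) = σ (p.succAbove j) :=
    Fin.castSucc_castPred _ _
  have he : ((finSuccEquiv' p).symm.trans (σ.trans (finSuccEquiv' (Fin.last n)))) (some j)
      = some ((σ (p.succAbove j)).castPred hne) := by
    simp only [Equiv.trans_apply, finSuccEquiv'_symm_some]
    conv_lhs => rw [← h2]
    rw [finSuccEquiv'_below (Fin.castSucc_lt_last _)]
  have h3 := Equiv.removeNone_some
    (e := (finSuccEquiv' p).symm.trans (σ.trans (finSuccEquiv' (Fin.last n)))) ⟨_, he⟩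
  rw [he] at h3
  have h4 : removeTopFun p σ j = (σ (p.succAbove j)).castPred hne := Option.some.inj h3
  rw [h4, h2]

def insertTopFun (p : Fin (n+1)) (τ : Equiv.Perm (Fin n)) : Equiv.Perm (Fin (n+1)) :=
  (finSuccEquiv' p).trans ((Equiv.optionCongr τ).trans (finSuccEquiv' (Fin.last n)).symm)

lemma insertTopFun_at (p : Fin (n+1)) (τ : Equiv.Perm (Fin n)) :
    insertTopFun p τ p = Fin.last n := by
  simp [insertTopFun, finSuccEquiv'_at, finSuccEquiv'_symm_none]

lemma insertTopFun_succAbove (p : Fin (n+1)) (τ : Equiv.Perm (Fin n)) (j : Fin n) :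
    insertTopFun p τ (p.succAbove j) = Fin.castSucc (τ j) := by
  simp only [insertTopFun, Equiv.trans_apply, finSuccEquiv'_succAbove,
    Equiv.optionCongr_apply, Option.map_some, finSuccEquiv'_symm_some,
    Fin.succAbove_last]

/-- The key bijection: permutations of `Fin (n+1)` sending `p` to the top value
correspond to permutations of `Fin n`. -/
def removeTop (p : Fin (n+1)) :
    {σ : Equiv.Perm (Fin (n+1)) // σ p = Fin.last n} ≃ Equiv.Perm (Fin n) where
  toFun σ := removeTopFun p σ.1
  invFun τ := ⟨insertTopFun p τ, insertTopFun_at p τ⟩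
  left_inv := by
    rintro ⟨σ, hp⟩
    apply Subtype.ext
    apply Equiv.ext
    intro x
    rcases eq_or_ne x p with rfl | hx
    · rw [insertTopFun_at, hp]
    · obtain ⟨j, rfl⟩ := Fin.exists_succAbove_eq hx
      rw [insertTopFun_succAbove, removeTop_apply p σ hp]
  right_inv := by
    intro τ
    apply Equiv.ext
    intro j
    apply Fin.castSucc_injective
    rw [removeTop_apply p _ (insertTopFun_at p τ), insertTopFun_succAbove]

lemma isPeak_iff {m : ℕ} (σ : Equiv.Perm (Fin m)) (i : ℕ) (h2 : 2 ≤ i) (h3 : i < m) :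
    IsPeak σ i ↔ (σ ⟨i-2, by omega⟩ < σ ⟨i-1, by omega⟩ ∧ σ ⟨i, h3⟩ < σ ⟨i-1, by omega⟩) := by
  constructor
  · rintro ⟨_, _, h⟩; exact h
  · intro h; exact ⟨h2, h3, h⟩

lemma lt_last_of_ne {p : Fin (n+1)} {σ : Equiv.Perm (Fin (n+1))} (hp : σ p = Fin.last n)
    {x : Fin (n+1)} (hx : x ≠ p) : σ x < Fin.last n :=
  lt_of_le_of_ne (Fin.le_last _) (fun h => hx (σ.injective (h.trans hp.symm)))

lemma not_isPeak_at {p : Fin (n+1)} {σ : Equiv.Perm (Fin (n+1))} (hp : σ p = Fin.last n) :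
    ¬ IsPeak σ p.val := by
  rintro ⟨h2, h3, _, hB⟩
  have e : (⟨p.val, h3⟩ : Fin (n+1)) = p := Fin.ext rfl
  rw [e, hp] at hB
  exact absurd hB (not_lt.mpr (Fin.le_last _))

lemma not_isPeak_at2 {p : Fin (n+1)} {σ : Equiv.Perm (Fin (n+1))} (hp : σ p = Fin.last n) :
    ¬ IsPeak σ (p.val + 2) := by
  rintro ⟨h2, h3, hA, _⟩
  have e : (⟨p.val + 2 - 2, by omega⟩ : Fin (n+1)) = p := Fin.ext rfl
  rw [e, hp] at hA
  exact absurd hA (not_lt.mpr (Fin.le_last _))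

lemma isPeak_summit {p : Fin (n+1)} {σ : Equiv.Perm (Fin (n+1))} (hp : σ p = Fin.last n)
    (h1 : 1 ≤ p.val) (h2 : p.val + 1 < n + 1) : IsPeak σ (p.val + 1) := by
  refine ⟨by omega, h2, ?_, ?_⟩
  · have e : (⟨p.val + 1 - 1, by omega⟩ : Fin (n+1)) = p := Fin.ext rfl
    rw [e, hp]
    exact lt_last_of_ne hp (Fin.ne_of_val_ne (show p.val + 1 - 2 ≠ p.val by omega))
  · have e : (⟨p.val + 1 - 1, by omega⟩ : Fin (n+1)) = p := Fin.ext rfl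
    rw [e, hp]
    exact lt_last_of_ne hp (Fin.ne_of_val_ne (show p.val + 1 ≠ p.val by omega))

lemma cmp_high {p : Fin (n+1)} {σ : Equiv.Perm (Fin (n+1))} (hp : σ p = Fin.last n)
    {a b a' b' : ℕ} (ha : a < n) (hb : b < n) (hpa : p.val ≤ a) (hpb : p.val ≤ b)
    (ha' : a' = a + 1) (hb' : b' = b + 1) (ha'' : a' < n+1) (hb'' : b' < n+1) :
    (removeTopFun p σ ⟨a, ha⟩ < removeTopFun p σ ⟨b, hb⟩ ↔ σ ⟨a', ha''⟩ < σ ⟨b', hb''⟩) := by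
  subst ha' hb'
  rw [← Fin.castSucc_lt_castSucc_iff, removeTop_apply p σ hp, removeTop_apply p σ hp]
  rw [Fin.succAbove_of_le_castSucc p ⟨a, ha⟩ (by rw [Fin.le_def]; exact hpa),
      Fin.succAbove_of_le_castSucc p ⟨b, hb⟩ (by rw [Fin.le_def]; exact hpb)]
  rfl

lemma cmp_low {p : Fin (n+1)} {σ : Equiv.Perm (Fin (n+1))} (hp : σ p = Fin.last n)
    {a b : ℕ} (ha : a < n) (hb : b < n) (hpa : a < p.val) (hpb : b < p.val)
    (ha'' : a < n+1) (hb'' : b < n+1) :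
    (removeTopFun p σ ⟨a, ha⟩ < removeTopFun p σ ⟨b, hb⟩ ↔ σ ⟨a, ha''⟩ < σ ⟨b, hb''⟩) := by
  rw [← Fin.castSucc_lt_castSucc_iff, removeTop_apply p σ hp, removeTop_apply p σ hp]
  rw [Fin.succAbove_of_castSucc_lt p ⟨a, ha⟩ (by rw [Fin.lt_def]; exact hpa),
      Fin.succAbove_of_castSucc_lt p ⟨b, hb⟩ (by rw [Fin.lt_def]; exact hpb)]
  rfl

/-- transfer of peaks entirely to the right of `p` -/
lemma isPeak_removeTop_high {p : Fin (n+1)} {σ : Equiv.Perm (Fin (n+1))}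
    (hp : σ p = Fin.last n) {i : ℕ} (hi : p.val + 2 ≤ i) (hin : i < n) :
    (IsPeak (removeTopFun p σ) i ↔ IsPeak σ (i + 1)) := by
  constructor
  · rintro ⟨h2, h3, hA, hB⟩
    refine ⟨by omega, by omega, ?_, ?_⟩
    · exact (cmp_high hp (by omega) (by omega) (by omega) (by omega)
        (show i+1-2 = (i-2)+1 by omega) (show i+1-1 = (i-1)+1 by omega)
        (by omega) (by omega)).mp hA
    · exact (cmp_high hp h3 (by omega) (by omega) (by omega)
        rfl (show i+1-1 = (i-1)+1 by omega) (by omega) (by omega)).mp hB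
  · rintro ⟨h2, h3, hA, hB⟩
    refine ⟨by omega, hin, ?_, ?_⟩
    · exact (cmp_high hp (by omega) (by omega) (by omega) (by omega)
        (show i+1-2 = (i-2)+1 by omega) (show i+1-1 = (i-1)+1 by omega)
        (by omega) (by omega)).mpr hA
    · exact (cmp_high hp hin (by omega) (by omega) (by omega)
        rfl (show i+1-1 = (i-1)+1 by omega) (by omega) (by omega)).mpr hB

/-- transfer of peaks entirely to the left of `p` -/
lemma isPeak_removeTop_low {p : Fin (n+1)} {σ : Equiv.Perm (Fin (n+1))}
    (hp : σ p = Fin.last n) {i : ℕ} (hi : i < p.val) :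
    (IsPeak (removeTopFun p σ) i ↔ IsPeak σ i) := by
  have hpn : p.val < n + 1 := p.isLt
  constructor
  · rintro ⟨h2, h3, hA, hB⟩
    refine ⟨h2, by omega, ?_, ?_⟩
    · exact (cmp_low hp (by omega) (by omega) (by omega) (by omega)
        (by omega) (by omega)).mp hA
    · exact (cmp_low hp h3 (by omega) (by omega) (by omega)
        (by omega) (by omega)).mp hB
  · rintro ⟨h2, h3, hA, hB⟩
    refine ⟨h2, by omega, ?_, ?_⟩
    · exact (cmp_low hp (by omega) (by omega) (by omega) (by omega)
        (by omega) (by omega)).mpr hA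
    · exact (cmp_low hp (by omega) (by omega) (by omega) (by omega)
        (by omega) (by omega)).mpr hB

def subsub {α : Type*} (P R : α → Prop) : {a // P a ∧ R a} ≃ {x : {a // R a} // P x.1} where
  toFun a := ⟨⟨a.1, a.2.2⟩, a.2.1⟩
  invFun x := ⟨x.1.1, x.2, x.1.2⟩
  left_inv a := rfl
  right_inv x := rfl

def fiberEquiv {α β : Type*} (f : α → β) (Q : α → Prop) :
    {a // Q a} ≃ Σ b : β, {a // Q a ∧ f a = b} where
  toFun a := ⟨f a.1, a.1, a.2, rfl⟩
  invFun x := ⟨x.2.1, x.2.2.1⟩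
  left_inv a := rfl
  right_inv := by rintro ⟨b, a, h, rfl⟩; rfl

lemma card_sigmaFiber (m : ℕ) (Q : Equiv.Perm (Fin (m+1)) → Prop) :
    cnt (m+1) Q
      = ∑ p : Fin (m+1), Nat.card {σ : Equiv.Perm (Fin (m+1)) // Q σ ∧ σ p = Fin.last m} := by
  classical
  unfold cnt
  rw [Nat.card_congr (fiberEquiv (fun σ : Equiv.Perm (Fin (m+1)) => σ⁻¹ (Fin.last m)) Q)]
  rw [Nat.card_eq_fintype_card, Fintype.card_sigma]
  refine Finset.sum_congr rfl (fun p _ => ?_)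
  rw [Nat.card_eq_fintype_card]
  apply Fintype.card_congr
  apply Equiv.subtypeEquivRight
  intro σ
  constructor
  · rintro ⟨hQ, h⟩; exact ⟨hQ, by rw [← h]; simp⟩
  · rintro ⟨hQ, h⟩; exact ⟨hQ, by rw [← h]; simp⟩

lemma fiber_card (m : ℕ) (Q : Equiv.Perm (Fin (m+1)) → Prop) (p : Fin (m+1))
    (Q' : Equiv.Perm (Fin m) → Prop)
    (h : ∀ σ : Equiv.Perm (Fin (m+1)), (hp : σ p = Fin.last m) → (Q σ ↔ Q' (removeTopFun p σ))) :
    Nat.card {σ : Equiv.Perm (Fin (m+1)) // Q σ ∧ σ p = Fin.last m} = cnt m Q' := by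
  apply Nat.card_congr
  refine (subsub Q (fun σ => σ p = Fin.last m)).trans ?_
  exact Equiv.subtypeEquiv (removeTop p) (fun s => h s.1 s.2)

lemma fiber_zero (m : ℕ) (Q : Equiv.Perm (Fin (m+1)) → Prop) (p : Fin (m+1))
    (h : ∀ σ : Equiv.Perm (Fin (m+1)), σ p = Fin.last m → ¬ Q σ) :
    Nat.card {σ : Equiv.Perm (Fin (m+1)) // Q σ ∧ σ p = Fin.last m} = 0 := by
  have : IsEmpty {σ : Equiv.Perm (Fin (m+1)) // Q σ ∧ σ p = Fin.last m} :=
    ⟨fun s => h s.1 s.2.2 s.2.1⟩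
  exact Nat.card_of_isEmpty

lemma cnt_perm (m : ℕ) : Nat.card (Equiv.Perm (Fin m)) = m.factorial := by
  rw [Nat.card_eq_fintype_card, Fintype.card_perm, Fintype.card_fin]

lemma cnt_true (m : ℕ) (Q : Equiv.Perm (Fin m) → Prop) (h : ∀ σ, Q σ) :
    cnt m Q = m.factorial := by
  unfold cnt
  rw [Nat.card_congr (Equiv.subtypeUnivEquiv h), cnt_perm]

lemma cnt_false (m : ℕ) (Q : Equiv.Perm (Fin m) → Prop) (h : ∀ σ, ¬ Q σ) :
    cnt m Q = 0 := by
  have : IsEmpty {σ : Equiv.Perm (Fin m) // Q σ} := ⟨fun s => h s.1 s.2⟩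
  exact Nat.card_of_isEmpty

lemma fiber_all (m : ℕ) (Q : Equiv.Perm (Fin (m+1)) → Prop) (p : Fin (m+1))
    (h : ∀ σ : Equiv.Perm (Fin (m+1)), σ p = Fin.last m → Q σ) :
    Nat.card {σ : Equiv.Perm (Fin (m+1)) // Q σ ∧ σ p = Fin.last m} = m.factorial := by
  rw [fiber_card m Q p (fun _ => True) (fun σ hp => by simp [h σ hp])]
  exact cnt_true m _ (fun _ => trivial)

lemma isPeak_bounds {m : ℕ} {σ : Equiv.Perm (Fin m)} {i : ℕ} (h : IsPeak σ i) :
    2 ≤ i ∧ i < m := by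
  obtain ⟨h2, h3, -⟩ := h; exact ⟨h2, h3⟩

lemma noPeakGT_small {p : Fin (n+1)} {σ : Equiv.Perm (Fin (n+1))} (hp : σ p = Fin.last n)
    {k : ℕ} (hpk : p.val + 1 ≤ k) :
    (NoPeakGT k σ ↔ NoPeakGT (max (k-1) (p.val+1)) (removeTopFun p σ)) := by
  constructor
  · intro h j hj hP
    obtain ⟨hj2, hjn⟩ := isPeak_bounds hP
    exact h (j+1) (by omega)
      ((isPeak_removeTop_high hp (by omega) (by omega)).mp hP)
  · intro h i hi hP
    obtain ⟨hi2, hin⟩ := isPeak_bounds hP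
    rcases eq_or_lt_of_le (show p.val + 2 ≤ i by omega) with he | hlt
    · exact not_isPeak_at2 hp (he ▸ hP)
    · have hP' : IsPeak σ ((i-1)+1) := by
        rw [show i-1+1 = i from by omega]; exact hP
      exact h (i-1) (by omega)
        ((isPeak_removeTop_high hp (by omega) (by omega)).mpr hP')

lemma noPeakGT_last {p : Fin (n+1)} {σ : Equiv.Perm (Fin (n+1))} (hp : σ p = Fin.last n)
    (hpn : p.val = n) {k : ℕ} :
    (NoPeakGT k σ ↔ NoPeakGT k (removeTopFun p σ)) := by
  constructor
  · intro h j hj hP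
    obtain ⟨hj2, hjn⟩ := isPeak_bounds hP
    exact h j hj ((isPeak_removeTop_low hp (by omega)).mp hP)
  · intro h i hi hP
    obtain ⟨hi2, hin⟩ := isPeak_bounds hP
    rcases eq_or_lt_of_le (show i ≤ n by omega) with he | hlt
    · subst he
      exact not_isPeak_at hp (by rw [hpn]; exact hP)
    · exact h i hi ((isPeak_removeTop_low hp (by omega)).mpr hP)

lemma exactPeak_last {p : Fin (n+1)} {σ : Equiv.Perm (Fin (n+1))} (hp : σ p = Fin.last n)
    (hpn : p.val = n) {j : ℕ} (hj : j < n) :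
    (ExactPeak j σ ↔ ExactPeak j (removeTopFun p σ)) := by
  constructor
  · rintro ⟨hPj, hAll⟩
    refine ⟨(isPeak_removeTop_low hp (by omega)).mpr hPj, ?_⟩
    intro i hP
    obtain ⟨hi2, hin⟩ := isPeak_bounds hP
    exact hAll i ((isPeak_removeTop_low hp (by omega)).mp hP)
  · rintro ⟨hPj, hAll⟩
    refine ⟨(isPeak_removeTop_low hp (by omega)).mp hPj, ?_⟩
    intro i hP
    obtain ⟨hi2, hin⟩ := isPeak_bounds hP
    rcases eq_or_lt_of_le (show i ≤ n by omega) with he | hlt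
    · exfalso
      subst he
      exact not_isPeak_at hp (by rw [hpn]; exact hP)
    · exact hAll i ((isPeak_removeTop_low hp (by omega)).mpr hP)

lemma exact3_p0 {p : Fin (n+1)} {σ : Equiv.Perm (Fin (n+1))} (hp : σ p = Fin.last n)
    (hp0 : p.val = 0) (hn : 3 ≤ n) :
    (ExactPeak 3 σ ↔ ExactPeak 2 (removeTopFun p σ)) := by
  constructor
  · rintro ⟨hP3, hAll⟩
    refine ⟨(isPeak_removeTop_high hp (by omega) (by omega)).mpr hP3, ?_⟩
    intro i hP
    obtain ⟨hi2, hin⟩ := isPeak_bounds hP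
    have := hAll (i+1) ((isPeak_removeTop_high hp (by omega) (by omega)).mp hP)
    omega
  · rintro ⟨hτ2, hAll⟩
    refine ⟨(isPeak_removeTop_high hp (by omega) (by omega)).mp hτ2, ?_⟩
    intro i hP
    obtain ⟨hi2, hin⟩ := isPeak_bounds hP
    rcases eq_or_lt_of_le hi2 with he | hlt
    · exfalso
      have h2 := not_isPeak_at2 hp
      rw [hp0] at h2
      exact h2 (by rw [← he] at hP; exact hP)
    · have hP' : IsPeak σ ((i-1)+1) := by
        rw [show i-1+1 = i from by omega]; exact hP
      have := hAll (i-1) ((isPeak_removeTop_high hp (by omega) (by omega)).mpr hP')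
      omega

lemma exact3_p2 {p : Fin (n+1)} {σ : Equiv.Perm (Fin (n+1))} (hp : σ p = Fin.last n)
    (hp2 : p.val = 2) (hn : 3 ≤ n) :
    (ExactPeak 3 σ ↔ NoPeakGT 3 (removeTopFun p σ)) := by
  constructor
  · rintro ⟨hP3, hAll⟩
    intro j hj hP
    obtain ⟨hj2, hjn⟩ := isPeak_bounds hP
    have := hAll (j+1) ((isPeak_removeTop_high hp (by omega) (by omega)).mp hP)
    omega
  · intro hN
    have hPm := isPeak_summit hp (by omega) (by omega)
    rw [hp2] at hPm
    refine ⟨hPm, ?_⟩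
    intro i hP
    obtain ⟨hi2, hin⟩ := isPeak_bounds hP
    rcases (show i = 2 ∨ i = 3 ∨ i = 4 ∨ 5 ≤ i by omega) with h | h | h | h
    · exfalso
      have := not_isPeak_at hp
      rw [hp2] at this
      exact this (by rw [h] at hP; exact hP)
    · exact h
    · exfalso
      have := not_isPeak_at2 hp
      rw [hp2] at this
      exact this (by rw [h] at hP; exact hP)
    · exfalso
      have hP' : IsPeak σ ((i-1)+1) := by
        rw [show i-1+1 = i from by omega]; exact hP
      exact hN (i-1) (by omega)
        ((isPeak_removeTop_high hp (by omega) (by omega)).mpr hP')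

lemma exact2_p1 {p : Fin (n+1)} {σ : Equiv.Perm (Fin (n+1))} (hp : σ p = Fin.last n)
    (hp1 : p.val = 1) (hn : 2 ≤ n) :
    (ExactPeak 2 σ ↔ NoPeakGT 2 (removeTopFun p σ)) := by
  constructor
  · rintro ⟨hP2, hAll⟩
    intro j hj hP
    obtain ⟨hj2, hjn⟩ := isPeak_bounds hP
    have := hAll (j+1) ((isPeak_removeTop_high hp (by omega) (by omega)).mp hP)
    omega
  · intro hN
    have hPm := isPeak_summit hp (by omega) (by omega)
    rw [hp1] at hPm
    refine ⟨hPm, ?_⟩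
    intro i hP
    obtain ⟨hi2, hin⟩ := isPeak_bounds hP
    rcases (show i = 2 ∨ i = 3 ∨ 4 ≤ i by omega) with h | h | h
    · exact h
    · exfalso
      have := not_isPeak_at2 hp
      rw [hp1] at this
      exact this (by rw [h] at hP; exact hP)
    · exfalso
      have hP' : IsPeak σ ((i-1)+1) := by
        rw [show i-1+1 = i from by omega]; exact hP
      exact hN (i-1) (by omega)
        ((isPeak_removeTop_high hp (by omega) (by omega)).mpr hP')

lemma noPeakGT_small' {p : Fin (n+1)} {σ : Equiv.Perm (Fin (n+1))} (hp : σ p = Fin.last n)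
    {k k' : ℕ} (hpk : p.val + 1 ≤ k) (hk' : k' = max (k-1) (p.val+1)) :
    (NoPeakGT k σ ↔ NoPeakGT k' (removeTopFun p σ)) := by
  subst hk'; exact noPeakGT_small hp hpk

lemma noPeakGT_all {m k : ℕ} (hm : m ≤ k+1) : ∀ σ : Equiv.Perm (Fin m), NoPeakGT k σ :=
  fun _ i hi hP => by have := isPeak_bounds hP; omega

lemma fiber_zero_noPeakGT {m k : ℕ} (hk : 1 ≤ k) (p : Fin (m+1)) (h1 : k ≤ p.val)
    (h2 : p.val < m) :
    Nat.card {σ : Equiv.Perm (Fin (m+1)) // NoPeakGT k σ ∧ σ p = Fin.last m} = 0 := by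
  apply fiber_zero
  intro σ hp hQ
  exact hQ (p.val + 1) (by omega) (isPeak_summit hp (by omega) (by omega))

lemma fiber_zero_exact_mid {m j : ℕ} (p : Fin (m+1)) (h1 : 1 ≤ p.val) (h2 : p.val < m)
    (hj : p.val + 1 ≠ j) :
    Nat.card {σ : Equiv.Perm (Fin (m+1)) // ExactPeak j σ ∧ σ p = Fin.last m} = 0 := by
  apply fiber_zero
  rintro σ hp ⟨-, hAll⟩
  exact hj (hAll (p.val + 1) (isPeak_summit hp (by omega) (by omega)))

lemma fiber_zero_exact_at {m j : ℕ} (p : Fin (m+1)) (hpj : p.val = j) :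
    Nat.card {σ : Equiv.Perm (Fin (m+1)) // ExactPeak j σ ∧ σ p = Fin.last m} = 0 := by
  apply fiber_zero
  rintro σ hp ⟨hPj, -⟩
  exact not_isPeak_at hp (by rw [hpj]; exact hPj)

lemma fiber_zero_exact2_p0 {m : ℕ} (p : Fin (m+1)) (hp0 : p.val = 0) :
    Nat.card {σ : Equiv.Perm (Fin (m+1)) // ExactPeak 2 σ ∧ σ p = Fin.last m} = 0 := by
  apply fiber_zero
  rintro σ hp ⟨hP2, -⟩
  have := not_isPeak_at2 hp
  rw [hp0] at this
  exact this hP2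

lemma A1_rec (hn : 2 ≤ n) : cnt (n+1) (NoPeakGT 1) = 2 * cnt n (NoPeakGT 1) := by
  classical
  rw [card_sigmaFiber]
  rw [(Finset.sum_subset
      (Finset.subset_univ ({⟨0, by omega⟩, Fin.last n} : Finset (Fin (n+1))))
      (fun p _ hp => by
        simp only [Finset.mem_insert, Finset.mem_singleton, not_or] at hp
        obtain ⟨ha, hb⟩ := hp
        have h1 : p.val ≠ 0 := fun h => ha (Fin.ext h)
        have h2 : p.val ≠ n := fun h => hb (Fin.ext h)
        exact fiber_zero_noPeakGT le_rfl p (by omega) (by omega))).symm]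
  rw [Finset.sum_insert (by simp [Fin.ext_iff]; omega), Finset.sum_singleton]
  rw [fiber_card n _ _ (NoPeakGT 1)
    (fun σ hp => noPeakGT_small' hp (Nat.le_refl 1) (by show (1:ℕ) = max (1-1) (0+1); norm_num))]
  rw [fiber_card n _ _ (NoPeakGT 1) (fun σ hp => noPeakGT_last hp rfl)]
  ring

lemma A2_rec (hn : 3 ≤ n) :
    cnt (n+1) (NoPeakGT 2) = 2 * cnt n (NoPeakGT 2) + cnt n (NoPeakGT 1) := by
  classical
  rw [card_sigmaFiber]
  rw [(Finset.sum_subset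
      (Finset.subset_univ ({⟨0, by omega⟩, ⟨1, by omega⟩, Fin.last n} : Finset (Fin (n+1))))
      (fun p _ hp => by
        simp only [Finset.mem_insert, Finset.mem_singleton, not_or] at hp
        obtain ⟨ha, hb, hc⟩ := hp
        have h1 : p.val ≠ 0 := fun h => ha (Fin.ext h)
        have h2 : p.val ≠ 1 := fun h => hb (Fin.ext h)
        have h3 : p.val ≠ n := fun h => hc (Fin.ext h)
        exact fiber_zero_noPeakGT (by omega) p (by omega) (by omega))).symm]
  rw [Finset.sum_insert (by simp [Fin.ext_iff]; omega),
      Finset.sum_insert (by simp [Fin.ext_iff]; omega), Finset.sum_singleton]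
  rw [fiber_card n _ _ (NoPeakGT 1)
    (fun σ hp => noPeakGT_small' hp (by show (0:ℕ)+1 ≤ 2; omega)
      (by show (1:ℕ) = max (2-1) (0+1); norm_num))]
  rw [fiber_card n _ _ (NoPeakGT 2)
    (fun σ hp => noPeakGT_small' hp (by show (1:ℕ)+1 ≤ 2; omega)
      (by show (2:ℕ) = max (2-1) (1+1); norm_num))]
  rw [fiber_card n _ _ (NoPeakGT 2) (fun σ hp => noPeakGT_last hp rfl)]
  ring

lemma A3_rec (hn : 4 ≤ n) :
    cnt (n+1) (NoPeakGT 3) = 2 * cnt n (NoPeakGT 3) + 2 * cnt n (NoPeakGT 2) := by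
  classical
  rw [card_sigmaFiber]
  rw [(Finset.sum_subset
      (Finset.subset_univ
        ({⟨0, by omega⟩, ⟨1, by omega⟩, ⟨2, by omega⟩, Fin.last n} : Finset (Fin (n+1))))
      (fun p _ hp => by
        simp only [Finset.mem_insert, Finset.mem_singleton, not_or] at hp
        obtain ⟨ha, hb, hc, hd⟩ := hp
        have h1 : p.val ≠ 0 := fun h => ha (Fin.ext h)
        have h2 : p.val ≠ 1 := fun h => hb (Fin.ext h)
        have h3 : p.val ≠ 2 := fun h => hc (Fin.ext h)
        have h4 : p.val ≠ n := fun h => hd (Fin.ext h)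
        exact fiber_zero_noPeakGT (by omega) p (by omega) (by omega))).symm]
  rw [Finset.sum_insert (by simp [Fin.ext_iff]; omega),
      Finset.sum_insert (by simp [Fin.ext_iff]; omega),
      Finset.sum_insert (by simp [Fin.ext_iff]; omega), Finset.sum_singleton]
  rw [fiber_card n _ _ (NoPeakGT 2)
    (fun σ hp => noPeakGT_small' hp (by show (0:ℕ)+1 ≤ 3; omega)
      (by show (2:ℕ) = max (3-1) (0+1); norm_num))]
  rw [fiber_card n _ _ (NoPeakGT 2)
    (fun σ hp => noPeakGT_small' hp (by show (1:ℕ)+1 ≤ 3; omega)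
      (by show (2:ℕ) = max (3-1) (1+1); norm_num))]
  rw [fiber_card n _ _ (NoPeakGT 3)
    (fun σ hp => noPeakGT_small' hp (by show (2:ℕ)+1 ≤ 3; omega)
      (by show (3:ℕ) = max (3-1) (2+1); norm_num))]
  rw [fiber_card n _ _ (NoPeakGT 3) (fun σ hp => noPeakGT_last hp rfl)]
  ring

lemma P2_rec (hn : 3 ≤ n) :
    cnt (n+1) (ExactPeak 2) = cnt n (ExactPeak 2) + cnt n (NoPeakGT 2) := by
  classical
  rw [card_sigmaFiber]
  rw [(Finset.sum_subset
      (Finset.subset_univ ({⟨1, by omega⟩, Fin.last n} : Finset (Fin (n+1))))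
      (fun p _ hp => by
        simp only [Finset.mem_insert, Finset.mem_singleton, not_or] at hp
        obtain ⟨ha, hb⟩ := hp
        have h1 : p.val ≠ 1 := fun h => ha (Fin.ext h)
        have h2 : p.val ≠ n := fun h => hb (Fin.ext h)
        rcases Nat.eq_zero_or_pos p.val with h0 | h0
        · exact fiber_zero_exact2_p0 p h0
        · exact fiber_zero_exact_mid p (by omega) (by omega) (by omega))).symm]
  rw [Finset.sum_insert (by simp [Fin.ext_iff]; omega), Finset.sum_singleton]
  rw [fiber_card n _ _ (NoPeakGT 2) (fun σ hp => exact2_p1 hp rfl (by omega))]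
  rw [fiber_card n _ _ (ExactPeak 2) (fun σ hp => exactPeak_last hp rfl (by omega))]
  ring

lemma P3_rec (hn : 4 ≤ n) :
    cnt (n+1) (ExactPeak 3)
      = cnt n (ExactPeak 3) + cnt n (ExactPeak 2) + cnt n (NoPeakGT 3) := by
  classical
  rw [card_sigmaFiber]
  rw [(Finset.sum_subset
      (Finset.subset_univ ({⟨0, by omega⟩, ⟨2, by omega⟩, Fin.last n} : Finset (Fin (n+1))))
      (fun p _ hp => by
        simp only [Finset.mem_insert, Finset.mem_singleton, not_or] at hp
        obtain ⟨ha, hb, hc⟩ := hp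
        have h1 : p.val ≠ 0 := fun h => ha (Fin.ext h)
        have h2 : p.val ≠ 2 := fun h => hb (Fin.ext h)
        have h3 : p.val ≠ n := fun h => hc (Fin.ext h)
        exact fiber_zero_exact_mid p (by omega) (by omega) (by omega))).symm]
  rw [Finset.sum_insert (by simp [Fin.ext_iff]; omega),
      Finset.sum_insert (by simp [Fin.ext_iff]; omega), Finset.sum_singleton]
  rw [fiber_card n _ _ (ExactPeak 2) (fun σ hp => exact3_p0 hp rfl (by omega))]
  rw [fiber_card n _ _ (NoPeakGT 3) (fun σ hp => exact3_p2 hp rfl (by omega))]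
  rw [fiber_card n _ _ (ExactPeak 3) (fun σ hp => exactPeak_last hp rfl (by omega))]
  ring

lemma A1_base : cnt 2 (NoPeakGT 1) = 2 := by
  rw [cnt_true 2 _ (noPeakGT_all (by omega))]; rfl

lemma A2_base : cnt 3 (NoPeakGT 2) = 6 := by
  rw [cnt_true 3 _ (noPeakGT_all (by omega))]; rfl

lemma A3_base : cnt 4 (NoPeakGT 3) = 24 := by
  rw [cnt_true 4 _ (noPeakGT_all (by omega))]; rfl

lemma P2_base : cnt 3 (ExactPeak 2) = 2 := by
  show cnt (2+1) (ExactPeak 2) = 2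
  rw [card_sigmaFiber 2, Fin.sum_univ_three]
  rw [fiber_zero_exact2_p0 (0 : Fin 3) rfl]
  rw [fiber_card 2 _ _ (NoPeakGT 2) (fun σ hp => exact2_p1 hp rfl (by omega))]
  rw [fiber_zero_exact_at (j := 2) (2 : Fin 3) (by decide)]
  rw [cnt_true 2 _ (noPeakGT_all (by omega))]
  rfl

lemma P3_base : cnt 4 (ExactPeak 3) = 8 := by
  show cnt (3+1) (ExactPeak 3) = 8
  rw [card_sigmaFiber 3, Fin.sum_univ_four]
  rw [fiber_card 3 _ _ (ExactPeak 2) (fun σ hp => exact3_p0 hp rfl (by omega))]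
  rw [fiber_zero_exact_mid (j := 3) (1 : Fin 4) (by decide) (by decide) (by decide)]
  rw [fiber_card 3 _ _ (NoPeakGT 3) (fun σ hp => exact3_p2 hp rfl (by omega))]
  rw [fiber_zero_exact_at (j := 3) (3 : Fin 4) (by decide)]
  rw [cnt_true 3 _ (noPeakGT_all (by omega)), P2_base]
  rfl

lemma F_A1 : ∀ n, 2 ≤ n → cnt n (NoPeakGT 1) = 2^(n-1) := by
  intro n hn
  induction n, hn using Nat.le_induction with
  | base => rw [A1_base]; rfl
  | succ n hn ih =>
    rw [A1_rec hn, ih]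
    rw [show n+1-1 = (n-1)+1 from by omega, pow_succ]
    ring

lemma F_A2 : ∀ n, 3 ≤ n → cnt n (NoPeakGT 2) = n * 2^(n-2) := by
  intro n hn
  induction n, hn using Nat.le_induction with
  | base => rw [A2_base]; rfl
  | succ n hn ih =>
    obtain ⟨m, rfl⟩ : ∃ m, n = m + 3 := ⟨n - 3, by omega⟩
    rw [A2_rec hn, ih, F_A1 _ (by omega)]
    rw [show m+3-2 = m+1 from by omega, show m+3-1 = m+2 from by omega,
        show m+3+1-2 = m+2 from by omega]
    ring

lemma F_A3 : ∀ n, 4 ≤ n → cnt n (NoPeakGT 3) = n * (n-1) * 2^(n-3) := by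
  intro n hn
  induction n, hn using Nat.le_induction with
  | base => rw [A3_base]; rfl
  | succ n hn ih =>
    obtain ⟨m, rfl⟩ : ∃ m, n = m + 4 := ⟨n - 4, by omega⟩
    rw [A3_rec hn, ih, F_A2 _ (by omega)]
    rw [show m+4-1 = m+3 from by omega, show m+4-3 = m+1 from by omega,
        show m+4-2 = m+2 from by omega, show m+4+1-1 = m+4 from by omega,
        show m+4+1-3 = m+2 from by omega]
    ring

lemma F_P2 : ∀ n, 3 ≤ n → cnt n (ExactPeak 2) = (n-2) * 2^(n-2) := by
  intro n hn
  induction n, hn using Nat.le_induction with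
  | base => rw [P2_base]; rfl
  | succ n hn ih =>
    obtain ⟨m, rfl⟩ : ∃ m, n = m + 3 := ⟨n - 3, by omega⟩
    rw [P2_rec hn, ih, F_A2 _ hn]
    rw [show m+3-2 = m+1 from by omega, show m+3+1-2 = m+2 from by omega]
    ring

lemma two_mul_choose_two : ∀ m : ℕ, 2 * Nat.choose m 2 = m * (m-1) := by
  intro m
  cases m with
  | zero => rfl
  | succ k =>
    rw [Nat.choose_two_right, show k+1-1 = k from rfl, mul_comm (k+1) k]
    exact Nat.mul_div_cancel' (Nat.even_mul_succ_self k).two_dvd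

lemma F_P3 : ∀ n, 4 ≤ n → cnt n (ExactPeak 3) = (Nat.choose (n-1) 2 - 1) * 2^(n-2) := by
  intro n hn
  induction n, hn using Nat.le_induction with
  | base => rw [P3_base]; rfl
  | succ n hn ih =>
    obtain ⟨m, rfl⟩ : ∃ m, n = m + 4 := ⟨n - 4, by omega⟩
    rw [P3_rec hn, ih, F_P2 _ (by omega), F_A3 _ hn]
    rw [show m+4-1 = m+3 from by omega, show m+4-2 = m+2 from by omega,
        show m+4-3 = m+1 from by omega, show m+4+1-1 = m+4 from by omega,
        show m+4+1-2 = m+3 from by omega]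
    have h2a : 2 * Nat.choose (m+3) 2 = (m+3) * (m+2) := by
      rw [two_mul_choose_two, show m+3-1 = m+2 from by omega]
    have h2b : 2 * Nat.choose (m+4) 2 = (m+4) * (m+3) := by
      rw [two_mul_choose_two, show m+4-1 = m+3 from by omega]
    have hx : (m+4) * (m+3) = (m+3) * (m+2) + (2*m+6) := by ring
    have hge : 6 ≤ (m+3) * (m+2) := by
      calc (6:ℕ) = 3 * 2 := rfl
        _ ≤ (m+3) * (m+2) := Nat.mul_le_mul (by omega) (by omega)
    have hge' : 3 ≤ Nat.choose (m+3) 2 := by linarith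
    have hd' : Nat.choose (m+3) 2 - 3 + 3 = Nat.choose (m+3) 2 := Nat.sub_add_cancel hge'
    obtain ⟨d, hd⟩ : ∃ d, Nat.choose (m+3) 2 = d + 3 := ⟨_, hd'.symm⟩
    have hb2 : 2 * Nat.choose (m+4) 2 = 2*d + 2*m + 12 := by linarith
    have hb : Nat.choose (m+4) 2 = d + m + 6 := by omega
    have hprod : (m+4) * (m+3) = 2*d + 2*m + 12 := by linarith
    rw [hd, hb, hprod, show d+3-1 = d+2 from by omega, show d+m+6-1 = d+m+5 from by omega]
    ring

lemma numPeakSet_eq (n : ℕ) (hn : 3 < n) : numPeakSet n {3} = cnt n (ExactPeak 3) := by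
  unfold numPeakSet cnt
  apply Nat.card_congr
  apply Equiv.subtypeEquivRight
  intro σ
  constructor
  · intro h
    have h3 : IsPeak σ 3 := by
      have hm : (3:ℕ) ∈ peakSet σ := by rw [h]; exact Finset.mem_singleton_self 3
      simp only [peakSet, Finset.mem_filter] at hm
      exact hm.2
    refine ⟨h3, fun i hi => ?_⟩
    have hm : i ∈ peakSet σ := by
      simp only [peakSet, Finset.mem_filter, Finset.mem_range]
      exact ⟨(isPeak_bounds hi).2, hi⟩
    rw [h] at hm
    simpa using hm
  · rintro ⟨h3, hAll⟩
    ext i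
    simp only [peakSet, Finset.mem_filter, Finset.mem_range, Finset.mem_singleton]
    constructor
    · rintro ⟨-, hP⟩; exact hAll i hP
    · rintro rfl; exact ⟨by omega, h3⟩

end PeakProof

theorem numPeakSet_singleton_three (n : ℕ) (hn : 5 ≤ n) :
    numPeakSet n {3} = (Nat.choose (n - 1) 2 - 1) * 2 ^ (n - 2) := by
  rw [PeakProof.numPeakSet_eq n (by omega), PeakProof.F_P3 n (by omega)]
end

section
/- Let n ≥ 3 and 2 ≤ a ≤ n−1. Then the number of permutations σ of [n] with empty peak set satisfying σ(1) = n > σ(2) and σ(n−1) < σ(n) = a equals 2^{a−2}, and it also equals the number of permutations σ of [n] with empty peak set satisfying σ(1) = a > σ(2) and σ(n−1) < σ(n) = n. -/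
/-! A permutation of `Fin n` without peaks decreases down to the position of its minimum `0` and
increases afterwards. It is therefore determined by the set `D` of values it takes up to that
position, and every `D ∋ 0` arises: list `D` decreasingly, then `Dᶜ` increasingly. The first value
is then `max D` and the last one `max Dᶜ`. In the first count (values shifted down by one) this
means that `D` contains `0` and every value above `a - 1` but not `a - 1`; in the second one, that
`{0, a - 1} ⊆ D ⊆ [0, a - 1]`. Either way `D` is free exactly on the `a - 2` values strictly
between `0` and `a - 1`, and the descent at the start and the ascent at the end come for free. -/

open Finset Order

section

lemma Fin.val_orderSucc_of_not_isMax {n : ℕ} {i : Fin n} (hi : ¬IsMax i) :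
    ((Order.succ i : Fin n) : ℕ) = i + 1 := by
  obtain ⟨j, hij⟩ := not_isMax_iff.mp hi
  have hlt : i < Order.succ i := lt_succ_of_not_isMax hi
  have hle : ((Order.succ i : Fin n) : ℕ) ≤ i + 1 :=
    succ_le_of_lt (show i < ⟨i + 1, by omega⟩ by simp [Fin.lt_def])
  rw [Fin.lt_def] at hlt
  omega

variable {n : ℕ} {σ : Equiv.Perm (Fin n)}

def IsValleyAt (σ : Equiv.Perm (Fin n)) (k : Fin n) : Prop :=
  StrictAntiOn σ (Set.Iic k) ∧ StrictMonoOn σ (Set.Ici k)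

lemma peakSet_eq_empty_of_isValleyAt {k : Fin n} (h : IsValleyAt σ k) : peakSet σ = ∅ := by
  classical
  rw [peakSet, filter_eq_empty_iff]
  rintro i - ⟨h₂, h₃, hl, hr⟩
  by_cases hk : (⟨i - 1, by omega⟩ : Fin n) ≤ k
  · exact hl.not_gt <| h.1 (le_trans (by simp [Fin.le_def]; omega) hk) hk
      (by simp [Fin.lt_def]; omega)
  · exact hr.not_gt <| h.2 (not_le.mp hk).le ((not_le.mp hk).le.trans (by simp [Fin.le_def]))
      (by simp [Fin.lt_def]; omega)

lemma lt_succ_succ_of_peakSet_eq_empty (hσ : peakSet σ = ∅) {i : Fin n} (hi : ¬IsMax (succ i))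
    (h : σ i < σ (succ i)) : σ (succ i) < σ (succ (succ i)) := by
  have hi' : ¬IsMax i := fun hm => hi (by rwa [hm.succ_eq])
  have h₁ := Fin.val_orderSucc_of_not_isMax hi'
  have h₂ := Fin.val_orderSucc_of_not_isMax hi
  refine (lt_or_gt_of_ne (σ.injective.ne (lt_succ_of_not_isMax hi).ne)).resolve_right fun h' => ?_
  have hpeak : (i : ℕ) + 2 ∈ peakSet σ := by
    classical
    have e₀ : (⟨i + 2 - 2, by omega⟩ : Fin n) = i := Fin.ext (by simp)
    have e₁ : (⟨i + 2 - 1, by omega⟩ : Fin n) = succ i := Fin.ext (by simp; omega)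
    have e₂ : (⟨i + 2, by omega⟩ : Fin n) = succ (succ i) := Fin.ext (by simp; omega)
    rw [peakSet, mem_filter]
    exact ⟨mem_range.mpr (by omega), by omega, by omega, by rwa [e₀, e₁], by rwa [e₁, e₂]⟩
  simp [hσ] at hpeak

lemma strictMonoOn_Ici_of_peakSet_eq_empty (hσ : peakSet σ = ∅) {i : Fin n} (h : σ i < σ (succ i)) :
    StrictMonoOn σ (Set.Ici i) := by
  refine strictMonoOn_of_lt_succ Set.ordConnected_Ici fun a ha hia _ => ?_
  replace hia : i ≤ a := hia
  induction hia using Succ.rec with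
  | rfl => exact h
  | succ b hib ih =>
    exact lt_succ_succ_of_peakSet_eq_empty hσ ha
      (ih (fun hb => ha (by rwa [hb.succ_eq])) (hib.trans (le_succ b)))

lemma isValleyAt_of_peakSet_eq_empty [NeZero n] (hσ : peakSet σ = ∅) :
    IsValleyAt σ (σ.symm 0) := by
  set m := σ.symm 0
  have hm : σ m = 0 := σ.apply_symm_apply 0
  have ascent_or_descent {i : Fin n} (hi : ¬IsMax i) : σ i < σ (succ i) ∨ σ (succ i) < σ i :=
    lt_or_gt_of_ne (σ.injective.ne (lt_succ_of_not_isMax hi).ne)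
  refine ⟨strictAntiOn_of_succ_lt Set.ordConnected_Iic fun a ha _ ham => ?_, ?_⟩
  · refine (ascent_or_descent ha).resolve_left fun hasc => ?_
    have ham' : a < m := (lt_succ_of_not_isMax ha).trans_le ham
    have := strictMonoOn_Ici_of_peakSet_eq_empty hσ hasc (Set.mem_Ici.2 le_rfl) ham'.le ham'
    exact (Fin.zero_le (σ a)).not_gt (hm ▸ this)
  · by_cases hmax : IsMax m
    · intro i hi j hj hij
      exact absurd hij (not_lt.mpr ((hmax hj).trans hi))
    · refine strictMonoOn_Ici_of_peakSet_eq_empty hσ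
        ((ascent_or_descent hmax).resolve_right fun h => ?_)
      exact (Fin.zero_le _).not_gt (hm ▸ h)

-- `D` in decreasing order, followed by `Dᶜ` in increasing order.
def valleyFun (D : Finset (Fin n)) (i : Fin n) : Fin n :=
  if h : (i : ℕ) < #D then D.orderEmbOfFin rfl ⟨#D - 1 - i, by omega⟩
  else Dᶜ.orderEmbOfFin (by rw [card_compl, Fintype.card_fin]) ⟨i - #D, by have := i.2; omega⟩

section valleyFun

variable {D : Finset (Fin n)}

lemma valleyFun_mem_iff {i : Fin n} : valleyFun D i ∈ D ↔ (i : ℕ) < #D := by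
  unfold valleyFun
  split_ifs with h
  · exact iff_of_true (orderEmbOfFin_mem _ _ _) h
  · exact iff_of_false (mem_compl.mp (orderEmbOfFin_mem _ _ _)) h

lemma valleyFun_strictAntiOn : StrictAntiOn (valleyFun D) {i | (i : ℕ) < #D} := by
  intro i (hi : (i : ℕ) < #D) j (hj : (j : ℕ) < #D) hij
  simp only [valleyFun, dif_pos hi, dif_pos hj]
  exact (D.orderEmbOfFin rfl).strictMono (Fin.mk_lt_mk.mpr (by have := Fin.lt_def.mp hij; omega))

lemma valleyFun_strictMonoOn : StrictMonoOn (valleyFun D) {i | #D ≤ (i : ℕ)} := by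
  intro i (hi : #D ≤ (i : ℕ)) j (hj : #D ≤ (j : ℕ)) hij
  simp only [valleyFun, dif_neg hi.not_gt, dif_neg hj.not_gt]
  exact (Dᶜ.orderEmbOfFin _).strictMono (Fin.mk_lt_mk.mpr (by have := Fin.lt_def.mp hij; omega))

lemma valleyFun_injective : Function.Injective (valleyFun D) := by
  intro i j hij
  have hmem : (i : ℕ) < #D ↔ (j : ℕ) < #D := by rw [← valleyFun_mem_iff, hij, valleyFun_mem_iff]
  by_cases hi : (i : ℕ) < #D
  · exact valleyFun_strictAntiOn.injOn hi (hmem.mp hi) hij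
  · exact valleyFun_strictMonoOn.injOn (not_lt.mp hi) (not_lt.mp (hi ∘ hmem.mpr)) hij

end valleyFun

noncomputable def valleyPerm (D : Finset (Fin n)) : Equiv.Perm (Fin n) :=
  Equiv.ofBijective (valleyFun D) (Finite.injective_iff_bijective.mp valleyFun_injective)

section valleyPerm

variable {D : Finset (Fin n)}

lemma valleyPerm_apply (i : Fin n) : valleyPerm D i = valleyFun D i := rfl

lemma valleyPerm_one_lt_zero (h : 2 ≤ #D) :
    valleyPerm D ⟨1, by have := card_finset_fin_le D; omega⟩ <
      valleyPerm D ⟨0, by have := card_finset_fin_le D; omega⟩ :=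
  valleyFun_strictAntiOn (show 0 < #D by omega) (show 1 < #D by omega) (Fin.mk_lt_mk.mpr one_pos)

variable [NeZero n]

lemma card_finset_fin_sub_one_lt (D : Finset (Fin n)) : #D - 1 < n := by
  have := card_finset_fin_le D
  have := NeZero.pos n
  omega

lemma valleyPerm_card_sub_one_eq_zero (h0 : 0 ∈ D) :
    valleyPerm D ⟨#D - 1, card_finset_fin_sub_one_lt D⟩ = 0 := by
  have hpos : 0 < #D := card_pos.mpr ⟨0, h0⟩
  rw [valleyPerm_apply, valleyFun, dif_pos (show #D - 1 < #D by omega)]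
  simp only [Nat.sub_self]
  rw [orderEmbOfFin_zero rfl hpos]
  exact le_antisymm (min'_le _ _ h0) (Fin.zero_le _)

lemma isValleyAt_valleyPerm (h0 : 0 ∈ D) :
    IsValleyAt (valleyPerm D) ⟨#D - 1, card_finset_fin_sub_one_lt D⟩ := by
  have hpos : 0 < #D := card_pos.mpr ⟨0, h0⟩
  refine ⟨valleyFun_strictAntiOn.mono fun i (hi : i ≤ _) => ?_, fun i hi j hj hij => ?_⟩
  · have : (i : ℕ) ≤ #D - 1 := hi
    show (i : ℕ) < #D
    omega
  · rcases (Set.mem_Ici.mp hi).eq_or_lt with rfl | hlt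
    · rw [valleyPerm_card_sub_one_eq_zero h0, Fin.pos_iff_ne_zero,
        ← valleyPerm_card_sub_one_eq_zero h0]
      exact (valleyPerm D).injective.ne hij.ne'
    · have hi' : #D ≤ (i : ℕ) := by have : #D - 1 < (i : ℕ) := hlt; omega
      exact valleyFun_strictMonoOn hi' (hi'.trans (Fin.lt_def.mp hij).le) hij

lemma valleyPerm_symm_zero (h0 : 0 ∈ D) :
    (valleyPerm D).symm 0 = ⟨#D - 1, card_finset_fin_sub_one_lt D⟩ :=
  (valleyPerm D).symm_apply_eq.mpr (valleyPerm_card_sub_one_eq_zero h0).symm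

lemma image_Iic_valleyPerm (h0 : 0 ∈ D) :
    (Iic ⟨#D - 1, card_finset_fin_sub_one_lt D⟩).image (valleyPerm D) = D := by
  have hpos : 0 < #D := card_pos.mpr ⟨0, h0⟩
  refine eq_of_subset_of_card_le (fun v hv => ?_) ?_
  · obtain ⟨i, hi, rfl⟩ := mem_image.mp hv
    have : (i : ℕ) ≤ #D - 1 := Fin.le_def.mp (mem_Iic.mp hi)
    exact valleyFun_mem_iff.mpr (by omega)
  · rw [card_image_of_injective _ (valleyPerm D).injective, Fin.card_Iic, Fin.val_mk]
    omega

lemma valleyPerm_zero_eq_max' (hD : D.Nonempty) : valleyPerm D ⟨0, NeZero.pos n⟩ = D.max' hD := by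
  have hpos : 0 < #D := card_pos.mpr hD
  rw [valleyPerm_apply, valleyFun, dif_pos hpos, ← orderEmbOfFin_last rfl hpos]
  rfl

lemma valleyPerm_last_eq_max' (hD : Dᶜ.Nonempty) :
    valleyPerm D ⟨n - 1, Nat.sub_one_lt (NeZero.ne n)⟩ = Dᶜ.max' hD := by
  have hpos : 0 < #Dᶜ := card_pos.mpr hD
  rw [card_compl, Fintype.card_fin] at hpos
  rw [valleyPerm_apply, valleyFun, dif_neg (by simp only; omega)]
  convert orderEmbOfFin_last (s := Dᶜ) (k := n - #D) (by rw [card_compl, Fintype.card_fin])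
    (by omega) using 2
  simp only [Fin.mk.injEq]
  omega

lemma compl_nonempty_of_valleyPerm_last_ne_zero (h0 : 0 ∈ D)
    (h : valleyPerm D ⟨n - 1, Nat.sub_one_lt (NeZero.ne n)⟩ ≠ 0) : Dᶜ.Nonempty := by
  rw [← card_pos, card_compl, Fintype.card_fin]
  by_contra! hc
  have e : (⟨n - 1, Nat.sub_one_lt (NeZero.ne n)⟩ : Fin n) =
      ⟨#D - 1, card_finset_fin_sub_one_lt D⟩ :=
    Fin.ext (by have := card_finset_fin_le D; simp only; omega)
  rw [e] at h
  exact h (valleyPerm_card_sub_one_eq_zero h0)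

lemma valleyPerm_lt_last (h0 : 0 ∈ D) (h : #D < n) :
    valleyPerm D ⟨n - 2, by omega⟩ < valleyPerm D ⟨n - 1, by omega⟩ := by
  have hpos : 0 < #D := card_pos.mpr ⟨0, h0⟩
  exact (isValleyAt_valleyPerm h0).2 (Fin.le_def.mpr (by simp only; omega))
    (Fin.le_def.mpr (by simp only; omega)) (Fin.mk_lt_mk.mpr (by omega))

end valleyPerm

lemma eq_valleyPerm_of_isValleyAt {k : Fin n} (h : IsValleyAt σ k) :
    σ = valleyPerm ((Iic k).image σ) := by
  set D := (Iic k).image σ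
  have hD : #D = k + 1 := by rw [card_image_of_injective _ σ.injective, Fin.card_Iic]
  have mem_D {i : Fin n} : σ i ∈ D ↔ i ≤ k := by simp [D]
  ext1 i
  rw [valleyPerm_apply, valleyFun]
  split_ifs with hi
  · have hf := orderEmbOfFin_unique (s := D) rfl (f := fun j => σ ⟨k - j, by omega⟩)
      (fun j => mem_D.mpr (Fin.le_def.mpr (by simp only; omega)))
      (fun j _ hj => h.1 (Fin.le_def.mpr (by simp only; omega))
        (Fin.le_def.mpr (by simp only; omega))
        (Fin.mk_lt_mk.mpr (by have := Fin.lt_def.mp hj; omega)))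
    rw [← hf]
    exact congrArg σ (Fin.ext (by simp only; omega))
  · have hf := orderEmbOfFin_unique (s := Dᶜ) (by rw [card_compl, Fintype.card_fin])
      (f := fun j => σ ⟨k + 1 + j, by have := j.2; omega⟩)
      (fun j => mem_compl.mpr (mem_D.not.mpr (not_le.mpr (Fin.lt_def.mpr (by simp only; omega)))))
      (fun j _ hj => h.2 (Fin.le_def.mpr (by simp only; omega))
        (Fin.le_def.mpr (by simp only; omega))
        (Fin.mk_lt_mk.mpr (by have := Fin.lt_def.mp hj; omega)))
    rw [← hf]
    exact congrArg σ (Fin.ext (by simp only; omega))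

noncomputable def peakFreeEquiv [NeZero n] :
    {σ : Equiv.Perm (Fin n) // peakSet σ = ∅} ≃ {D : Finset (Fin n) // 0 ∈ D} where
  toFun σ := ⟨(Iic (σ.1.symm 0)).image σ.1,
    mem_image.mpr ⟨_, mem_Iic.mpr le_rfl, σ.1.apply_symm_apply 0⟩⟩
  invFun D := ⟨valleyPerm D.1, peakSet_eq_empty_of_isValleyAt (isValleyAt_valleyPerm D.2)⟩
  left_inv σ := Subtype.ext (eq_valleyPerm_of_isValleyAt (isValleyAt_of_peakSet_eq_empty σ.2)).symm
  right_inv D := Subtype.ext (by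
    simp only
    rw [valleyPerm_symm_zero D.2]
    exact image_Iic_valleyPerm D.2)

lemma card_peakSet_eq_empty_and [NeZero n] (Q : Equiv.Perm (Fin n) → Prop) :
    Nat.card {σ : Equiv.Perm (Fin n) // peakSet σ = ∅ ∧ Q σ} =
      Nat.card {D : Finset (Fin n) // 0 ∈ D ∧ Q (valleyPerm D)} :=
  Nat.card_congr <| (Equiv.subtypeSubtypeEquivSubtypeInter _ Q).symm.trans <|
    (peakFreeEquiv.subtypeEquiv fun σ =>
        (congrArg (fun τ => Q τ.1) (peakFreeEquiv.symm_apply_apply σ).symm).to_iff).trans <|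
      Equiv.subtypeSubtypeEquivSubtypeInter (0 ∈ ·) (fun D => Q (valleyPerm D))

lemma card_peakSet_eq_empty_and_eq_two_pow [NeZero n] (Q : Equiv.Perm (Fin n) → Prop)
    {s t : Finset (Fin n)} (hs : 0 ∈ s) (hst : s ⊆ t)
    (hQ : ∀ D, 0 ∈ D → (Q (valleyPerm D) ↔ D ∈ Icc s t)) :
    Nat.card {σ : Equiv.Perm (Fin n) // peakSet σ = ∅ ∧ Q σ} = 2 ^ (#t - #s) := by
  rw [card_peakSet_eq_empty_and, ← card_Icc_finset hst, ← Nat.card_eq_finsetCard]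
  refine Nat.card_congr (Equiv.subtypeEquivRight fun D => ⟨fun ⟨h0, hQD⟩ => (hQ D h0).mp hQD,
    fun hD => ?_⟩)
  have h0 : 0 ∈ D := (mem_Icc.mp hD).1 hs
  exact ⟨h0, (hQ D h0).mpr hD⟩

section Endpoints

variable {a : ℕ} {D : Finset (Fin n)}

lemma valleyPerm_max_first_iff (ha₂ : 2 ≤ a) (han : a < n)
    (h0 : (⟨0, by omega⟩ : Fin n) ∈ D) :
    ((valleyPerm D ⟨0, by omega⟩ : ℕ) + 1 = n ∧
        valleyPerm D ⟨1, by omega⟩ < valleyPerm D ⟨0, by omega⟩ ∧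
        valleyPerm D ⟨n - 2, by omega⟩ < valleyPerm D ⟨n - 1, by omega⟩ ∧
        (valleyPerm D ⟨n - 1, by omega⟩ : ℕ) + 1 = a) ↔
      D ∈ Icc (Ioc ⟨0, by omega⟩ ⟨a - 1, by omega⟩)ᶜ {⟨a - 1, by omega⟩}ᶜ := by
  have : NeZero n := ⟨by omega⟩
  set v : Fin n := ⟨a - 1, by omega⟩
  rw [mem_Icc, ← compl_subset_compl, compl_compl, subset_compl_singleton]
  constructor
  · rintro ⟨-, -, -, hlast⟩
    have hD : Dᶜ.Nonempty := compl_nonempty_of_valleyPerm_last_ne_zero h0 fun h => by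
      rw [h, Fin.val_zero] at hlast
      omega
    rw [valleyPerm_last_eq_max' hD] at hlast
    obtain ⟨hv, hle⟩ := (max'_eq_iff Dᶜ hD v).mp (Fin.ext (by simp only [v]; omega))
    refine ⟨fun w hw => mem_Ioc.mpr ⟨?_, hle w hw⟩, mem_compl.mp hv⟩
    exact Fin.pos_iff_ne_zero.mpr fun h => mem_compl.mp hw (h ▸ h0)
  · rintro ⟨hs, hv⟩
    have hlastD : (⟨n - 1, by omega⟩ : Fin n) ∈ D := by
      by_contra h
      have := Fin.le_def.mp (mem_Ioc.mp (hs (mem_compl.mpr h))).2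
      simp only [v] at this
      omega
    have h2 : 2 ≤ #D := by
      rw [← card_pair (show (⟨0, by omega⟩ : Fin n) ≠ ⟨n - 1, by omega⟩ by simp; omega)]
      exact card_le_card (insert_subset h0 (singleton_subset_iff.mpr hlastD))
    have hD : Dᶜ.Nonempty := ⟨v, mem_compl.mpr hv⟩
    have hc : #D < n := by simpa using card_lt_univ_of_notMem hv
    refine ⟨?_, valleyPerm_one_lt_zero h2, valleyPerm_lt_last h0 hc, ?_⟩
    · rw [valleyPerm_zero_eq_max' ⟨_, h0⟩, (max'_eq_iff D ⟨_, h0⟩ ⟨n - 1, by omega⟩).mpr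
        ⟨hlastD, fun w _ => Fin.le_def.mpr (by simp only; omega)⟩]
      simp only
      omega
    · rw [valleyPerm_last_eq_max' hD, (max'_eq_iff Dᶜ hD v).mpr ⟨mem_compl.mpr hv, fun w hw =>
        (mem_Ioc.mp (hs hw)).2⟩]
      simp only [v]
      omega

lemma valleyPerm_max_last_iff (ha₂ : 2 ≤ a) (han : a < n)
    (h0 : (⟨0, by omega⟩ : Fin n) ∈ D) :
    ((valleyPerm D ⟨0, by omega⟩ : ℕ) + 1 = a ∧
        valleyPerm D ⟨1, by omega⟩ < valleyPerm D ⟨0, by omega⟩ ∧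
        valleyPerm D ⟨n - 2, by omega⟩ < valleyPerm D ⟨n - 1, by omega⟩ ∧
        (valleyPerm D ⟨n - 1, by omega⟩ : ℕ) + 1 = n) ↔
      D ∈ Icc {⟨0, by omega⟩, ⟨a - 1, by omega⟩} (Iic ⟨a - 1, by omega⟩) := by
  have : NeZero n := ⟨by omega⟩
  set v : Fin n := ⟨a - 1, by omega⟩
  rw [mem_Icc, insert_subset_iff, singleton_subset_iff]
  constructor
  · rintro ⟨hfirst, -, -, -⟩
    rw [valleyPerm_zero_eq_max' ⟨_, h0⟩] at hfirst
    obtain ⟨hv, hle⟩ := (max'_eq_iff D ⟨_, h0⟩ v).mp (Fin.ext (by simp only [v]; omega))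
    exact ⟨⟨h0, hv⟩, fun w hw => mem_Iic.mpr (hle w hw)⟩
  · rintro ⟨⟨-, hv⟩, ht⟩
    have hlastD : (⟨n - 1, by omega⟩ : Fin n) ∉ D := fun h => by
      have := Fin.le_def.mp (mem_Iic.mp (ht h))
      simp only [v] at this
      omega
    have h2 : 2 ≤ #D := by
      rw [← card_pair (show (⟨0, by omega⟩ : Fin n) ≠ v by simp [v]; omega)]
      exact card_le_card (insert_subset h0 (singleton_subset_iff.mpr hv))
    have hD : Dᶜ.Nonempty := ⟨_, mem_compl.mpr hlastD⟩
    have hc : #D < n := by simpa using card_lt_univ_of_notMem hlastD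
    refine ⟨?_, valleyPerm_one_lt_zero h2, valleyPerm_lt_last h0 hc, ?_⟩
    · rw [valleyPerm_zero_eq_max' ⟨_, h0⟩, (max'_eq_iff D ⟨_, h0⟩ v).mpr ⟨hv, fun w hw =>
        mem_Iic.mp (ht hw)⟩]
      simp only [v]
      omega
    · rw [valleyPerm_last_eq_max' hD, (max'_eq_iff Dᶜ hD ⟨n - 1, by omega⟩).mpr
        ⟨mem_compl.mpr hlastD, fun w _ => Fin.le_def.mpr (by simp only; omega)⟩]
      simp only
      omega

end Endpoints

end

theorem int_count_one_part (n a : ℕ) (ha₂ : 2 ≤ a) (han : a ≤ n - 1) :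
    Nat.card {σ : Equiv.Perm (Fin n) // peakSet σ = ∅ ∧
        (σ ⟨0, by omega⟩ : ℕ) + 1 = n ∧ σ ⟨1, by omega⟩ < σ ⟨0, by omega⟩ ∧
        σ ⟨n - 2, by omega⟩ < σ ⟨n - 1, by omega⟩ ∧ (σ ⟨n - 1, by omega⟩ : ℕ) + 1 = a}
      = 2 ^ (a - 2) ∧
    Nat.card {σ : Equiv.Perm (Fin n) // peakSet σ = ∅ ∧
        (σ ⟨0, by omega⟩ : ℕ) + 1 = a ∧ σ ⟨1, by omega⟩ < σ ⟨0, by omega⟩ ∧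
        σ ⟨n - 2, by omega⟩ < σ ⟨n - 1, by omega⟩ ∧ (σ ⟨n - 1, by omega⟩ : ℕ) + 1 = n}
      = 2 ^ (a - 2) := by
  have : NeZero n := ⟨by omega⟩
  have han' : a < n := by omega
  constructor
  · rw [card_peakSet_eq_empty_and_eq_two_pow _ (by simp) (by simp [Fin.lt_def]; omega)
      fun D h0 => valleyPerm_max_first_iff ha₂ han' h0]
    simp only [card_compl, Fintype.card_fin, Fin.card_Ioc, card_singleton]
    congr 1
    omega
  · rw [card_peakSet_eq_empty_and_eq_two_pow _ (by simp) (by simp [insert_subset_iff])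
      fun D h0 => valleyPerm_max_last_iff ha₂ han' h0]
    rw [Fin.card_Iic, card_pair (by simp [Fin.ext_iff]; omega), Fin.val_mk,
      Nat.sub_add_cancel (by omega : 1 ≤ a)]
end

section
/- Let c and c' be compositions of the same integer n ≥ 1. Suppose that Ini_{·,b}(c) ≤ Ini_{·,b}(c') for all b ∈ [n], with strict inequality for at least one b. Then for every nonempty composition d such that c⊕d is admissible, P(c⊕d) < P(c'⊕d); in particular, c⊕d is not maximal. -/
/-- `Int_{a,b}(c)` : the number of permutations `σ` of `{1,…,n}` (`n = |c|`) with peak set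
`S(c)` such that `σ(1) = a > σ(2)` and `σ(n-1) < σ(n) = b`. -/
noncomputable def IntCount (c : List ℕ) (a b : ℕ) : ℕ :=
  Nat.card {σ : Equiv.Perm (Fin c.sum) // peakSet σ = compPeaks c ∧
    ∃ (h : 2 ≤ c.sum),
      (σ ⟨0, by omega⟩ : ℕ) + 1 = a ∧ σ ⟨1, by omega⟩ < σ ⟨0, by omega⟩ ∧
      σ ⟨c.sum - 2, by omega⟩ < σ ⟨c.sum - 1, by omega⟩ ∧
      (σ ⟨c.sum - 1, by omega⟩ : ℕ) + 1 = b}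

/-- `Ini_{·,b}(c)` : the number of permutations `σ` of `{1,…,n}` (`n = |c|`) with peak set
`S(c)` such that `σ(n-1) < σ(n) = b`. -/
noncomputable def IniCount (c : List ℕ) (b : ℕ) : ℕ :=
  Nat.card {σ : Equiv.Perm (Fin c.sum) // peakSet σ = compPeaks c ∧
    ∃ (h : 1 ≤ c.sum),
      σ ⟨c.sum - 2, by omega⟩ < σ ⟨c.sum - 1, by omega⟩ ∧
      (σ ⟨c.sum - 1, by omega⟩ : ℕ) + 1 = b}

namespace CompIni

variable {n m : ℕ}

lemma compl_card (A : Finset (Fin (n + m))) (hA : A.card = n) : Aᶜ.card = m := by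
  rw [Finset.card_compl, hA, Fintype.card_fin]; omega

noncomputable def join (A : Finset (Fin (n + m))) (hA : A.card = n)
    (τ : Equiv.Perm (Fin n)) (ρ : Equiv.Perm (Fin m)) : Equiv.Perm (Fin (n + m)) :=
  finSumFinEquiv.symm.trans <|
    (Equiv.sumCongr (τ.trans (A.orderIsoOfFin hA).toEquiv)
      (ρ.trans (Aᶜ.orderIsoOfFin (compl_card A hA)).toEquiv)).trans <|
    (Equiv.sumCongr (Equiv.refl _)
      (Equiv.subtypeEquivRight (fun _ => Finset.mem_compl))).trans
      (Equiv.sumCompl (· ∈ A))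

lemma join_castAdd (A : Finset (Fin (n + m))) (hA : A.card = n)
    (τ : Equiv.Perm (Fin n)) (ρ : Equiv.Perm (Fin m)) (i : Fin n) :
    join A hA τ ρ (Fin.castAdd m i) = ↑(A.orderIsoOfFin hA (τ i)) := by
  simp [join]

lemma join_natAdd (A : Finset (Fin (n + m))) (hA : A.card = n)
    (τ : Equiv.Perm (Fin n)) (ρ : Equiv.Perm (Fin m)) (j : Fin m) :
    join A hA τ ρ (Fin.natAdd n j) = ↑(Aᶜ.orderIsoOfFin (compl_card A hA) (ρ j)) := by
  simp [join]

/-- the set of values of the first `n` positions -/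
noncomputable def dA (σ : Equiv.Perm (Fin (n + m))) : Finset (Fin (n + m)) :=
  Finset.image (fun i : Fin n => σ (Fin.castAdd m i)) Finset.univ

lemma castAdd_inj : Function.Injective (Fin.castAdd m : Fin n → Fin (n + m)) := by
  intro a b h
  apply Fin.ext
  simpa using congrArg Fin.val h

lemma dA_card (σ : Equiv.Perm (Fin (n + m))) : (dA σ).card = n := by
  rw [dA, Finset.card_image_of_injective _ (fun a b h => castAdd_inj (σ.injective h))]
  simp

lemma mem_dA (σ : Equiv.Perm (Fin (n + m))) (i : Fin n) : σ (Fin.castAdd m i) ∈ dA σ := by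
  exact Finset.mem_image_of_mem _ (Finset.mem_univ i)

lemma mem_dA_compl (σ : Equiv.Perm (Fin (n + m))) (j : Fin m) :
    σ (Fin.natAdd n j) ∈ (dA σ)ᶜ := by
  rw [Finset.mem_compl]
  intro h
  rw [dA, Finset.mem_image] at h
  obtain ⟨i, -, hi⟩ := h
  have := σ.injective hi
  have := congrArg Fin.val this
  simp at this
  omega

noncomputable def dTau (σ : Equiv.Perm (Fin (n + m))) : Equiv.Perm (Fin n) :=
  Equiv.ofBijective
    (fun i => ((dA σ).orderIsoOfFin (dA_card σ)).symm ⟨σ (Fin.castAdd m i), mem_dA σ i⟩)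
    (Finite.injective_iff_bijective.mp (by
      intro a b h
      have h2 := congrArg ((dA σ).orderIsoOfFin (dA_card σ)) h
      simp only [OrderIso.apply_symm_apply] at h2
      exact castAdd_inj (σ.injective (congrArg Subtype.val h2))))

noncomputable def dRho (σ : Equiv.Perm (Fin (n + m))) : Equiv.Perm (Fin m) :=
  Equiv.ofBijective
    (fun j => ((dA σ)ᶜ.orderIsoOfFin (compl_card _ (dA_card σ))).symm
      ⟨σ (Fin.natAdd n j), mem_dA_compl σ j⟩)
    (Finite.injective_iff_bijective.mp (by
      intro a b h
      have h2 := congrArg ((dA σ)ᶜ.orderIsoOfFin (compl_card _ (dA_card σ))) h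
      simp only [OrderIso.apply_symm_apply] at h2
      have h3 := σ.injective (congrArg Subtype.val h2)
      apply Fin.ext
      simpa using congrArg Fin.val h3))

lemma dTau_apply (σ : Equiv.Perm (Fin (n + m))) (i : Fin n) :
    dTau σ i = ((dA σ).orderIsoOfFin (dA_card σ)).symm ⟨σ (Fin.castAdd m i), mem_dA σ i⟩ := rfl

lemma dRho_apply (σ : Equiv.Perm (Fin (n + m))) (j : Fin m) :
    dRho σ j = ((dA σ)ᶜ.orderIsoOfFin (compl_card _ (dA_card σ))).symm
      ⟨σ (Fin.natAdd n j), mem_dA_compl σ j⟩ := rfl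

lemma join_d (σ : Equiv.Perm (Fin (n + m))) :
    join (dA σ) (dA_card σ) (dTau σ) (dRho σ) = σ := by
  apply Equiv.ext
  intro x
  rcases lt_or_ge (x : ℕ) n with hx | hx
  · have hx1 : x = Fin.castAdd m ⟨(x : ℕ), hx⟩ := by apply Fin.ext; simp
    rw [hx1, join_castAdd, dTau_apply, OrderIso.apply_symm_apply]
  · have hj : (x : ℕ) - n < m := by omega
    have hx1 : x = Fin.natAdd n ⟨(x : ℕ) - n, hj⟩ := by apply Fin.ext; simp; omega
    rw [hx1, join_natAdd, dRho_apply, OrderIso.apply_symm_apply]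

lemma orderIsoOfFin_congr {k : ℕ} {A B : Finset (Fin (n + m))} (hAB : A = B)
    {hA : A.card = k} {hB : B.card = k} (i : Fin k) :
    (↑(A.orderIsoOfFin hA i) : Fin (n + m)) = ↑(B.orderIsoOfFin hB i) := by
  subst hAB; rfl

lemma dA_join (A : Finset (Fin (n + m))) (hA : A.card = n)
    (τ : Equiv.Perm (Fin n)) (ρ : Equiv.Perm (Fin m)) :
    dA (join A hA τ ρ) = A := by
  unfold dA
  ext x
  simp only [Finset.mem_image, Finset.mem_univ, true_and, join_castAdd]
  constructor
  · rintro ⟨i, rfl⟩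
    exact (A.orderIsoOfFin hA (τ i)).2
  · intro hx
    refine ⟨τ.symm ((A.orderIsoOfFin hA).symm ⟨x, hx⟩), ?_⟩
    simp

lemma dTau_join (A : Finset (Fin (n + m))) (hA : A.card = n)
    (τ : Equiv.Perm (Fin n)) (ρ : Equiv.Perm (Fin m)) :
    dTau (join A hA τ ρ) = τ := by
  apply Equiv.ext
  intro i
  rw [dTau_apply, OrderIso.symm_apply_eq]
  apply Subtype.ext
  show join A hA τ ρ (Fin.castAdd m i) = _
  rw [join_castAdd]
  exact (orderIsoOfFin_congr (dA_join A hA τ ρ) (τ i)).symm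

lemma dRho_join (A : Finset (Fin (n + m))) (hA : A.card = n)
    (τ : Equiv.Perm (Fin n)) (ρ : Equiv.Perm (Fin m)) :
    dRho (join A hA τ ρ) = ρ := by
  apply Equiv.ext
  intro j
  rw [dRho_apply, OrderIso.symm_apply_eq]
  apply Subtype.ext
  show join A hA τ ρ (Fin.natAdd n j) = _
  rw [join_natAdd]
  exact (orderIsoOfFin_congr (congrArg compl (dA_join A hA τ ρ)) (ρ j)).symm


section Peaks

lemma mem_peakSet {k : ℕ} (σ : Equiv.Perm (Fin k)) (i : ℕ) :
    i ∈ peakSet σ ↔ IsPeak σ i := by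
  classical
  simp only [peakSet, Finset.mem_filter, Finset.mem_range]
  exact ⟨fun h => h.2, fun h => ⟨by obtain ⟨_, h₃, _⟩ := h; omega, h⟩⟩

lemma peak_facts {k : ℕ} {σ : Equiv.Perm (Fin k)} {i : ℕ} (h : i ∈ peakSet σ) :
    2 ≤ i ∧ i < k := by
  obtain ⟨h2, h3, -⟩ := (mem_peakSet σ i).mp h; exact ⟨h2, h3⟩

lemma orderIso_lt {k : ℕ} {A : Finset (Fin (n + m))} {h : A.card = k} {i j : Fin k} :
    (↑(A.orderIsoOfFin h i) : Fin (n + m)) < ↑(A.orderIsoOfFin h j) ↔ i < j := by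
  rw [Subtype.coe_lt_coe, OrderIso.lt_iff_lt]

variable (A : Finset (Fin (n + m))) (hA : A.card = n)
    (τ : Equiv.Perm (Fin n)) (ρ : Equiv.Perm (Fin m))

lemma join_apply_left (k : ℕ) (hk : k < n) (hk2 : k < n + m) :
    join A hA τ ρ ⟨k, hk2⟩ = ↑(A.orderIsoOfFin hA (τ ⟨k, hk⟩)) := by
  have h1 : (⟨k, hk2⟩ : Fin (n + m)) = Fin.castAdd m ⟨k, hk⟩ := rfl
  rw [h1, join_castAdd]

lemma join_apply_right (k j : ℕ) (hj : j < m) (hk2 : k < n + m) (hkj : k = n + j) :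
    join A hA τ ρ ⟨k, hk2⟩ = ↑(Aᶜ.orderIsoOfFin (compl_card A hA) (ρ ⟨j, hj⟩)) := by
  have h1 : (⟨k, hk2⟩ : Fin (n + m)) = Fin.natAdd n ⟨j, hj⟩ := by
    apply Fin.ext; simpa using hkj
  rw [h1, join_natAdd]

lemma isPeak_join_low {i : ℕ} (hi : i < n) :
    IsPeak (join A hA τ ρ) i ↔ IsPeak τ i := by
  constructor
  · rintro ⟨h2, h3, hx, hy⟩
    rw [join_apply_left A hA τ ρ (i - 2) (by omega), join_apply_left A hA τ ρ (i - 1) (by omega)] at hx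
    rw [join_apply_left A hA τ ρ i hi, join_apply_left A hA τ ρ (i - 1) (by omega)] at hy
    exact ⟨h2, hi, orderIso_lt.mp hx, orderIso_lt.mp hy⟩
  · rintro ⟨h2, h3, hx, hy⟩
    refine ⟨h2, by omega, ?_, ?_⟩
    · rw [join_apply_left A hA τ ρ (i - 2) (by omega), join_apply_left A hA τ ρ (i - 1) (by omega)]
      exact orderIso_lt.mpr hx
    · rw [join_apply_left A hA τ ρ i hi, join_apply_left A hA τ ρ (i - 1) (by omega)]
      exact orderIso_lt.mpr hy

lemma isPeak_join_n (hn : 2 ≤ n) (hm : 1 ≤ m) :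
    IsPeak (join A hA τ ρ) n ↔
      (τ ⟨n - 2, by omega⟩ < τ ⟨n - 1, by omega⟩ ∧
        (↑(Aᶜ.orderIsoOfFin (compl_card A hA) (ρ ⟨0, hm⟩)) : Fin (n + m)) <
          ↑(A.orderIsoOfFin hA (τ ⟨n - 1, by omega⟩))) := by
  constructor
  · rintro ⟨h2, h3, hx, hy⟩
    rw [join_apply_left A hA τ ρ (n - 2) (by omega), join_apply_left A hA τ ρ (n - 1) (by omega)] at hx
    rw [join_apply_right A hA τ ρ n 0 hm h3 (by omega), join_apply_left A hA τ ρ (n - 1) (by omega)] at hy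
    exact ⟨orderIso_lt.mp hx, hy⟩
  · rintro ⟨hx, hy⟩
    refine ⟨hn, by omega, ?_, ?_⟩
    · rw [join_apply_left A hA τ ρ (n - 2) (by omega), join_apply_left A hA τ ρ (n - 1) (by omega)]
      exact orderIso_lt.mpr hx
    · rw [join_apply_right A hA τ ρ n 0 hm (by omega) (by omega), join_apply_left A hA τ ρ (n - 1) (by omega)]
      exact hy

lemma isPeak_join_n1 (hn : 1 ≤ n) (hm : 1 ≤ m) :
    IsPeak (join A hA τ ρ) (n + 1) →
      (↑(A.orderIsoOfFin hA (τ ⟨n - 1, by omega⟩)) : Fin (n + m)) <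
        ↑(Aᶜ.orderIsoOfFin (compl_card A hA) (ρ ⟨0, hm⟩)) := by
  rintro ⟨h2, h3, hx, hy⟩
  rw [join_apply_left A hA τ ρ (n + 1 - 2) (by omega),
    join_apply_right A hA τ ρ (n + 1 - 1) 0 hm (by omega) (by omega)] at hx
  exact hx

lemma isPeak_join_high {j : ℕ} (hj : 2 ≤ j) :
    IsPeak (join A hA τ ρ) (n + j) ↔ IsPeak ρ j := by
  constructor
  · rintro ⟨h2, h3, hx, hy⟩
    have hjm : j < m := by omega
    have h1 : j - 1 < m := by omega
    have h2' : j - 2 < m := by omega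
    have e1 : n + j - 2 = n + (j - 2) := by omega
    have e2 : n + j - 1 = n + (j - 1) := by omega
    rw [join_apply_right A hA τ ρ (n + j - 2) (j - 2) h2' (by omega) e1,
      join_apply_right A hA τ ρ (n + j - 1) (j - 1) h1 (by omega) e2] at hx
    rw [join_apply_right A hA τ ρ (n + j) j hjm h3 rfl,
      join_apply_right A hA τ ρ (n + j - 1) (j - 1) h1 (by omega) e2] at hy
    exact ⟨hj, hjm, orderIso_lt.mp hx, orderIso_lt.mp hy⟩
  · rintro ⟨h2, h3, hx, hy⟩
    have hnj : n + j < n + m := by omega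
    have h1 : j - 1 < m := by omega
    have h2' : j - 2 < m := by omega
    have e1 : n + j - 2 = n + (j - 2) := by omega
    have e2 : n + j - 1 = n + (j - 1) := by omega
    refine ⟨by omega, hnj, ?_, ?_⟩
    · rw [join_apply_right A hA τ ρ (n + j - 2) (j - 2) h2' (by omega) e1,
        join_apply_right A hA τ ρ (n + j - 1) (j - 1) h1 (by omega) e2]
      exact orderIso_lt.mpr hx
    · rw [join_apply_right A hA τ ρ (n + j) j h3 hnj rfl,
        join_apply_right A hA τ ρ (n + j - 1) (j - 1) h1 (by omega) e2]
      exact orderIso_lt.mpr hy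

lemma peakSet_join (hn : 2 ≤ n) (hm : 1 ≤ m)
    (hasc : τ ⟨n - 2, by omega⟩ < τ ⟨n - 1, by omega⟩)
    (hcross : (↑(Aᶜ.orderIsoOfFin (compl_card A hA) (ρ ⟨0, hm⟩)) : Fin (n + m)) <
      ↑(A.orderIsoOfFin hA (τ ⟨n - 1, by omega⟩))) :
    peakSet (join A hA τ ρ) = peakSet τ ∪ {n} ∪ (peakSet ρ).image (n + ·) := by
  ext i
  simp only [Finset.mem_union, Finset.mem_image, Finset.mem_singleton, mem_peakSet]
  rcases lt_trichotomy i n with hi | rfl | hi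
  · rw [isPeak_join_low A hA τ ρ hi]
    constructor
    · exact fun h => Or.inl (Or.inl h)
    · rintro ((h | rfl) | ⟨j, hj, rfl⟩)
      · exact h
      · omega
      · obtain ⟨h2, -, -⟩ := hj; omega
  · constructor
    · intro _; exact Or.inl (Or.inr rfl)
    · intro _; rw [isPeak_join_n A hA τ ρ hn hm]; exact ⟨hasc, hcross⟩
  · obtain ⟨j, rfl⟩ : ∃ j, i = n + j := ⟨i - n, by omega⟩
    have hj1 : 1 ≤ j := by omega
    rcases eq_or_lt_of_le hj1 with rfl | hj2
    · constructor
      · intro hp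
        exact absurd (isPeak_join_n1 A hA τ ρ (by omega) hm hp) (asymm hcross)
      · rintro ((h | h) | ⟨j', hj', hEq⟩)
        · obtain ⟨-, h3, -⟩ := h; omega
        · omega
        · obtain ⟨h2, -, -⟩ := hj'; omega
    · rw [isPeak_join_high A hA τ ρ (by omega)]
      constructor
      · exact fun h => Or.inr ⟨j, h, rfl⟩
      · rintro ((h | h) | ⟨j', hj', hEq⟩)
        · obtain ⟨-, h3, -⟩ := h; omega
        · omega
        · have : j' = j := by omega
          subst this; exact hj'

end Peaks

section Extract

variable {n m : ℕ}

lemma extract (hn : 2 ≤ n) (hm : 1 ≤ m) (S T : Finset ℕ) (hS : ∀ s ∈ S, s < n)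
    (σ : Equiv.Perm (Fin (n + m)))
    (hσ : peakSet σ = S ∪ {n} ∪ T.image (n + ·)) :
    peakSet (dTau σ) = S ∧
    (dTau σ) ⟨n - 2, by omega⟩ < (dTau σ) ⟨n - 1, by omega⟩ ∧
    (↑((dA σ)ᶜ.orderIsoOfFin (compl_card _ (dA_card σ)) ((dRho σ) ⟨0, hm⟩)) : Fin (n + m)) <
      ↑((dA σ).orderIsoOfFin (dA_card σ) ((dTau σ) ⟨n - 1, by omega⟩)) ∧
    ({n} ∪ T.image (n + ·) : Finset ℕ) = {n} ∪ (peakSet (dRho σ)).image (n + ·) := by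
  have hj := join_d σ
  have hpn : IsPeak σ n := by
    rw [← mem_peakSet, hσ]
    simp
  rw [← hj] at hpn
  obtain ⟨hasc, hcross⟩ := (isPeak_join_n _ _ _ _ hn hm).mp hpn
  have hps := peakSet_join (dA σ) (dA_card σ) (dTau σ) (dRho σ) hn hm hasc hcross
  rw [hj, hσ] at hps
  -- hps : S ∪ {n} ∪ T.image (n+·) = peakSet τ ∪ {n} ∪ (peakSet ρ).image (n+·)
  have fact1 : peakSet (dTau σ) = S := by
    ext x
    constructor
    · intro hx
      have hb := peak_facts hx
      have hx2 : x ∈ S ∪ {n} ∪ T.image (n + ·) := by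
        rw [hps]
        exact Finset.mem_union_left _ (Finset.mem_union_left _ hx)
      simp only [Finset.mem_union, Finset.mem_image, Finset.mem_singleton] at hx2
      rcases hx2 with ((h | h) | ⟨t, ht, h⟩)
      · exact h
      · omega
      · omega
    · intro hx
      have hxn := hS x hx
      have hx2 : x ∈ peakSet (dTau σ) ∪ {n} ∪ (peakSet (dRho σ)).image (n + ·) := by
        rw [← hps]
        exact Finset.mem_union_left _ (Finset.mem_union_left _ hx)
      simp only [Finset.mem_union, Finset.mem_image, Finset.mem_singleton] at hx2
      rcases hx2 with ((h | h) | ⟨t, ht, h⟩)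
      · exact h
      · omega
      · omega
  have fact2 : ({n} ∪ T.image (n + ·) : Finset ℕ) = {n} ∪ (peakSet (dRho σ)).image (n + ·) := by
    ext x
    simp only [Finset.mem_union, Finset.mem_image, Finset.mem_singleton]
    constructor
    · rintro (rfl | ⟨t, ht, rfl⟩)
      · exact Or.inl rfl
      · have hx2 : n + t ∈ peakSet (dTau σ) ∪ {n} ∪ (peakSet (dRho σ)).image (n + ·) := by
          rw [← hps]
          simp only [Finset.mem_union, Finset.mem_image, Finset.mem_singleton]
          exact Or.inr ⟨t, ht, rfl⟩
        simp only [Finset.mem_union, Finset.mem_image, Finset.mem_singleton] at hx2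
        rcases hx2 with ((h | h) | ⟨t', ht', h⟩)
        · have := (peak_facts h).2; omega
        · exact Or.inl h
        · exact Or.inr ⟨t', ht', h⟩
    · rintro (rfl | ⟨t, ht, rfl⟩)
      · exact Or.inl rfl
      · have h2t := (peak_facts ht).1
        have hx2 : n + t ∈ S ∪ {n} ∪ T.image (n + ·) := by
          rw [hps]
          simp only [Finset.mem_union, Finset.mem_image, Finset.mem_singleton]
          exact Or.inr ⟨t, ht, rfl⟩
        simp only [Finset.mem_union, Finset.mem_image, Finset.mem_singleton] at hx2
        rcases hx2 with ((h | h) | ⟨t', ht', h⟩)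
        · have := hS _ h; omega
        · omega
        · exact Or.inr ⟨t', ht', h⟩
  exact ⟨fact1, hasc, hcross, fact2⟩

end Extract

/-- the `Ini` counting subtype -/
abbrev IniS (n : ℕ) (S : Finset ℕ) (b : ℕ) :=
  {σ : Equiv.Perm (Fin n) // peakSet σ = S ∧ ∃ _ : 1 ≤ n,
    σ ⟨n - 2, by omega⟩ < σ ⟨n - 1, by omega⟩ ∧ (σ ⟨n - 1, by omega⟩ : ℕ) + 1 = b}

lemma IniS_card_zero {n : ℕ} (S : Finset ℕ) {b : ℕ} (hb : b = 0 ∨ n < b) :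
    Nat.card (IniS n S b) = 0 := by
  have : IsEmpty (IniS n S b) := by
    constructor
    rintro ⟨σ, -, h1, -, hlast⟩
    have := (σ ⟨n - 1, by omega⟩).isLt
    omega
  exact Nat.card_of_isEmpty

lemma card_lt_of_inj_of_not_range {X Y : Type*} [Finite Y] (f : X → Y)
    (hf : Function.Injective f) {y : Y} (hy : ∀ x, f x ≠ y) :
    Nat.card X < Nat.card Y := by
  have : Finite X := Finite.of_injective f hf
  letI := Fintype.ofFinite X
  letI := Fintype.ofFinite Y
  rw [Nat.card_eq_fintype_card, Nat.card_eq_fintype_card]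
  refine Fintype.card_lt_of_injective_of_notMem f hf (b := y) ?_
  rintro ⟨x, hx⟩
  exact hy x hx

theorem core (n m : ℕ) (hm : 1 ≤ m) (S S' T : Finset ℕ)
    (hS : ∀ s ∈ S, s < n) (hS' : ∀ s ∈ S', s < n)
    (hle : ∀ b, Nat.card (IniS n S b) ≤ Nat.card (IniS n S' b))
    (hlt : ∃ b, Nat.card (IniS n S b) < Nat.card (IniS n S' b))
    (hpos : 0 < numPeakSet (n + m) (S ∪ {n} ∪ T.image (n + ·))) :
    numPeakSet (n + m) (S ∪ {n} ∪ T.image (n + ·)) <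
      numPeakSet (n + m) (S' ∪ {n} ∪ T.image (n + ·)) := by
  obtain ⟨b₀, hb₀⟩ := hlt
  have hn : 2 ≤ n := by
    by_contra hcon
    haveI hE : IsEmpty (IniS n S' b₀) := by
      constructor
      rintro ⟨σ, hps0, h1, hcmp, hl0⟩
      have hn1 : n = 1 := by omega
      subst hn1
      exact lt_irrefl _ hcmp
    have h0 : Nat.card (IniS n S' b₀) = 0 := Nat.card_of_isEmpty
    omega
  have hn1 : n - 1 < n := by omega
  have h1n : 1 ≤ n := by omega
  -- choose per-b injections
  have hemb : ∀ b, ∃ f : IniS n S b → IniS n S' b, Function.Injective f := by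
    intro b
    letI := Fintype.ofFinite (IniS n S b)
    letI := Fintype.ofFinite (IniS n S' b)
    have h := hle b
    rw [Nat.card_eq_fintype_card, Nat.card_eq_fintype_card] at h
    obtain ⟨g⟩ := Function.Embedding.nonempty_of_card_le h
    exact ⟨g, g.injective⟩
  choose f hf using hemb
  have flast : ∀ (b : ℕ) (x : IniS n S b), (((f b x).1 ⟨n - 1, hn1⟩ : Fin n) : ℕ) + 1 = b := by
    intro b x
    obtain ⟨h1, h2, h3, h4⟩ := (f b x).2
    exact h4
  have fasc : ∀ (b : ℕ) (x : IniS n S b),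
      (f b x).1 ⟨n - 2, by omega⟩ < (f b x).1 ⟨n - 1, hn1⟩ := by
    intro b x
    obtain ⟨h1, h2, h3, h4⟩ := (f b x).2
    exact h3
  have fps : ∀ (b : ℕ) (x : IniS n S b), peakSet (f b x).1 = S' := fun b x => (f b x).2.1
  -- witness with the given peak set
  have hne : Nonempty {σ : Equiv.Perm (Fin (n + m)) //
      peakSet σ = S ∪ {n} ∪ T.image (n + ·)} := (Nat.card_pos_iff.mp hpos).1
  obtain ⟨⟨σ₀, hσ₀⟩⟩ := hne
  obtain ⟨-, -, -, fact2⟩ := extract hn hm S T hS σ₀ hσ₀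
  have hU'alt : ∀ ρ : Equiv.Perm (Fin m),
      ({n} ∪ T.image (n + ·) : Finset ℕ) = {n} ∪ (peakSet ρ).image (n + ·) →
      S' ∪ {n} ∪ (peakSet ρ).image (n + ·) = S' ∪ {n} ∪ T.image (n + ·) := by
    intro ρ h
    rw [Finset.union_assoc, ← h, ← Finset.union_assoc]
  -- well-definedness of the replacement
  have wd : ∀ σ : Equiv.Perm (Fin (n + m)), peakSet σ = S ∪ {n} ∪ T.image (n + ·) →
      ∀ τ' : Equiv.Perm (Fin n), peakSet τ' = S' →
      τ' ⟨n - 2, by omega⟩ < τ' ⟨n - 1, hn1⟩ →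
      τ' ⟨n - 1, hn1⟩ = dTau σ ⟨n - 1, hn1⟩ →
      peakSet (join (dA σ) (dA_card σ) τ' (dRho σ)) = S' ∪ {n} ∪ T.image (n + ·) := by
    intro σ hσ τ' h1 h2 h3
    obtain ⟨-, -, hcross, fact2σ⟩ := extract hn hm S T hS σ hσ
    have hps := peakSet_join (dA σ) (dA_card σ) τ' (dRho σ) hn hm h2 (by rw [h3]; exact hcross)
    rw [hps, h1]
    exact hU'alt _ fact2σ
  have spec1 : ∀ p : {σ : Equiv.Perm (Fin (n + m)) //
      peakSet σ = S ∪ {n} ∪ T.image (n + ·)}, peakSet (dTau p.1) = S :=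
    fun p => (extract hn hm S T hS p.1 p.2).1
  have spec2 : ∀ p : {σ : Equiv.Perm (Fin (n + m)) //
      peakSet σ = S ∪ {n} ∪ T.image (n + ·)},
      dTau p.1 ⟨n - 2, by omega⟩ < dTau p.1 ⟨n - 1, hn1⟩ :=
    fun p => (extract hn hm S T hS p.1 p.2).2.1
  have wd2 : ∀ (σ : Equiv.Perm (Fin (n + m)))
      (hσ : peakSet σ = S ∪ {n} ∪ T.image (n + ·)) (b : ℕ) (x : IniS n S b),
      b = ((dTau σ ⟨n - 1, hn1⟩ : Fin n) : ℕ) + 1 →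
      peakSet (join (dA σ) (dA_card σ) (f b x).1 (dRho σ)) = S' ∪ {n} ∪ T.image (n + ·) := by
    intro σ hσ b x hb
    refine wd σ hσ (f b x).1 (fps b x) (fasc b x) (Fin.ext ?_)
    have h1 := flast b x
    omega
  -- generic injectivity transfer across equal b's
  have gen : ∀ b₁ b₂ : ℕ, b₁ = b₂ → ∀ (x₁ : IniS n S b₁) (x₂ : IniS n S b₂),
      (f b₁ x₁).1 = (f b₂ x₂).1 → x₁.1 = x₂.1 := by
    intro b₁ b₂ hb
    subst hb
    intro x₁ x₂ hxy
    exact congrArg Subtype.val (hf b₁ (Subtype.ext hxy))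
  have join_congr : ∀ (A B : Finset (Fin (n + m))) (_ : A = B)
      (hA : A.card = n) (hB : B.card = n) (τ : Equiv.Perm (Fin n)) (ρ : Equiv.Perm (Fin m)),
      join A hA τ ρ = join B hB τ ρ := by
    intro A B hAB
    subst hAB
    intro _ _ _ _
    rfl
  -- the non-surjectivity witness
  have hnosurj : ¬ Function.Surjective (f b₀) := by
    intro hs
    have := Nat.card_le_card_of_surjective (f b₀) hs
    omega
  rw [Function.Surjective] at hnosurj
  push_neg at hnosurj
  obtain ⟨τs, hτs⟩ := hnosurj
  -- the top value set
  have hAstar : (Finset.image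
      (fun i : Fin n => (⟨m + (i : ℕ), by omega⟩ : Fin (n + m))) Finset.univ).card = n := by
    rw [Finset.card_image_of_injective _ (fun a b h => by
      have h2 : m + (a : ℕ) = m + (b : ℕ) := congrArg Fin.val h
      exact Fin.ext (by omega))]
    simp
  set Astar : Finset (Fin (n + m)) :=
    Finset.image (fun i : Fin n => (⟨m + (i : ℕ), by omega⟩ : Fin (n + m))) Finset.univ
    with hAstarDef
  have hmemA : ∀ x ∈ Astar, m ≤ (x : ℕ) := by
    intro x hx
    rw [hAstarDef, Finset.mem_image] at hx
    obtain ⟨i, -, rfl⟩ := hx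
    simp
  have hmemAc : ∀ x ∈ Astarᶜ, (x : ℕ) < m := by
    intro x hx
    rw [Finset.mem_compl] at hx
    by_contra hcon
    push_neg at hcon
    refine hx ?_
    rw [hAstarDef, Finset.mem_image]
    refine ⟨⟨(x : ℕ) - m, by omega⟩, Finset.mem_univ _, Fin.ext ?_⟩
    show m + ((x : ℕ) - m) = (x : ℕ)
    omega
  have hcrossStar : (↑(Astarᶜ.orderIsoOfFin (compl_card _ hAstar) ((dRho σ₀) ⟨0, hm⟩))
        : Fin (n + m)) < ↑(Astar.orderIsoOfFin hAstar (τs.1 ⟨n - 1, hn1⟩)) := by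
    have h1 := hmemAc _ (Astarᶜ.orderIsoOfFin (compl_card _ hAstar) ((dRho σ₀) ⟨0, hm⟩)).2
    have h2 := hmemA _ (Astar.orderIsoOfFin hAstar (τs.1 ⟨n - 1, hn1⟩)).2
    exact Fin.lt_def.mpr (by omega)
  have hσstar : peakSet (join Astar hAstar τs.1 (dRho σ₀)) = S' ∪ {n} ∪ T.image (n + ·) := by
    obtain ⟨hps', h1', hasc', hlast'⟩ := τs.2
    have hps := peakSet_join Astar hAstar τs.1 (dRho σ₀) hn hm hasc' hcrossStar
    rw [hps, hps']
    exact hU'alt _ fact2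
  have τslast : ((τs.1 ⟨n - 1, hn1⟩ : Fin n) : ℕ) + 1 = b₀ := by
    obtain ⟨h1, h2, h3, h4⟩ := τs.2
    exact h4
  -- assemble
  show Nat.card {σ : Equiv.Perm (Fin (n + m)) // peakSet σ = S ∪ {n} ∪ T.image (n + ·)} <
    Nat.card {σ : Equiv.Perm (Fin (n + m)) // peakSet σ = S' ∪ {n} ∪ T.image (n + ·)}
  refine card_lt_of_inj_of_not_range
    (fun p => ⟨join (dA p.1) (dA_card p.1)
        (f (((dTau p.1 ⟨n - 1, hn1⟩ : Fin n) : ℕ) + 1)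
          ⟨dTau p.1, spec1 p, h1n, spec2 p, rfl⟩).1 (dRho p.1),
      wd2 p.1 p.2 _ ⟨dTau p.1, spec1 p, h1n, spec2 p, rfl⟩ rfl⟩)
    ?_ (y := ⟨join Astar hAstar τs.1 (dRho σ₀), hσstar⟩) ?_
  · -- injectivity
    intro p₁ p₂ h
    have h1 : join (dA p₁.1) (dA_card p₁.1)
        (f (((dTau p₁.1 ⟨n - 1, hn1⟩ : Fin n) : ℕ) + 1)
          ⟨dTau p₁.1, spec1 p₁, h1n, spec2 p₁, rfl⟩).1 (dRho p₁.1)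
        = join (dA p₂.1) (dA_card p₂.1)
        (f (((dTau p₂.1 ⟨n - 1, hn1⟩ : Fin n) : ℕ) + 1)
          ⟨dTau p₂.1, spec1 p₂, h1n, spec2 p₂, rfl⟩).1 (dRho p₂.1) :=
      congrArg Subtype.val h
    have hA12 : dA p₁.1 = dA p₂.1 := by
      rw [← dA_join (dA p₁.1) (dA_card p₁.1) _ (dRho p₁.1), h1, dA_join]
    have hT12 : (f (((dTau p₁.1 ⟨n - 1, hn1⟩ : Fin n) : ℕ) + 1)
          ⟨dTau p₁.1, spec1 p₁, h1n, spec2 p₁, rfl⟩).1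
        = (f (((dTau p₂.1 ⟨n - 1, hn1⟩ : Fin n) : ℕ) + 1)
          ⟨dTau p₂.1, spec1 p₂, h1n, spec2 p₂, rfl⟩).1 := by
      rw [← dTau_join (dA p₁.1) (dA_card p₁.1)
        (f (((dTau p₁.1 ⟨n - 1, hn1⟩ : Fin n) : ℕ) + 1)
          ⟨dTau p₁.1, spec1 p₁, h1n, spec2 p₁, rfl⟩).1 (dRho p₁.1), h1, dTau_join]
    have hR12 : dRho p₁.1 = dRho p₂.1 := by
      rw [← dRho_join (dA p₁.1) (dA_card p₁.1) _ (dRho p₁.1), h1, dRho_join]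
    have hb12 : ((dTau p₁.1 ⟨n - 1, hn1⟩ : Fin n) : ℕ) + 1
        = ((dTau p₂.1 ⟨n - 1, hn1⟩ : Fin n) : ℕ) + 1 := by
      rw [← flast _ ⟨dTau p₁.1, spec1 p₁, h1n, spec2 p₁, rfl⟩,
        ← flast _ ⟨dTau p₂.1, spec1 p₂, h1n, spec2 p₂, rfl⟩, hT12]
    have hx12 : dTau p₁.1 = dTau p₂.1 :=
      gen _ _ hb12 ⟨dTau p₁.1, spec1 p₁, h1n, spec2 p₁, rfl⟩
        ⟨dTau p₂.1, spec1 p₂, h1n, spec2 p₂, rfl⟩ hT12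
    apply Subtype.ext
    calc p₁.1 = join (dA p₁.1) (dA_card p₁.1) (dTau p₁.1) (dRho p₁.1) := (join_d p₁.1).symm
    _ = join (dA p₂.1) (dA_card p₂.1) (dTau p₂.1) (dRho p₂.1) := by
        rw [hx12, hR12]; exact join_congr _ _ hA12 _ _ _ _
    _ = p₂.1 := join_d p₂.1
  · -- misses the extra element
    intro p hcontra
    have h1 : join (dA p.1) (dA_card p.1)
        (f (((dTau p.1 ⟨n - 1, hn1⟩ : Fin n) : ℕ) + 1)
          ⟨dTau p.1, spec1 p, h1n, spec2 p, rfl⟩).1 (dRho p.1)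
        = join Astar hAstar τs.1 (dRho σ₀) := congrArg Subtype.val hcontra
    have hT12 : (f (((dTau p.1 ⟨n - 1, hn1⟩ : Fin n) : ℕ) + 1)
          ⟨dTau p.1, spec1 p, h1n, spec2 p, rfl⟩).1 = τs.1 := by
      rw [← dTau_join (dA p.1) (dA_card p.1)
        (f (((dTau p.1 ⟨n - 1, hn1⟩ : Fin n) : ℕ) + 1)
          ⟨dTau p.1, spec1 p, h1n, spec2 p, rfl⟩).1 (dRho p.1), h1, dTau_join]
    have hb12 : ((dTau p.1 ⟨n - 1, hn1⟩ : Fin n) : ℕ) + 1 = b₀ := by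
      rw [← flast _ ⟨dTau p.1, spec1 p, h1n, spec2 p, rfl⟩, hT12, τslast]
    have gen2 : ∀ b : ℕ, b = b₀ → ∀ x : IniS n S b, (f b x).1 = τs.1 → False := by
      intro b hb
      subst hb
      intro x hx
      exact hτs x (Subtype.ext hx)
    exact gen2 _ hb12 ⟨dTau p.1, spec1 p, h1n, spec2 p, rfl⟩ hT12


section Wrapper

lemma sum_take_lt (c : List ℕ) (hpos : ∀ x ∈ c, 0 < x) {s : ℕ} (hs : s ∈ compPeaks c) :
    s < c.sum := by
  rw [compPeaks, Finset.mem_image] at hs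
  obtain ⟨i, hi, rfl⟩ := hs
  rw [Finset.mem_range] at hi
  have hsplit : (c.take (i + 1)).sum + (c.drop (i + 1)).sum = c.sum := by
    rw [← List.sum_append, List.take_append_drop]
  have hne : c.drop (i + 1) ≠ [] := by
    rw [← List.length_pos_iff, List.length_drop]
    omega
  have hpos2 : 0 < (c.drop (i + 1)).sum :=
    List.sum_pos _ (fun x hx => hpos x (List.mem_of_mem_drop hx)) hne
  omega

lemma compPeaks_append (c d : List ℕ) (hc : c ≠ []) (hd : d ≠ []) :
    compPeaks (c ++ d) = compPeaks c ∪ {c.sum} ∪ (compPeaks d).image (c.sum + ·) := by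
  have hc1 : 1 ≤ c.length := List.length_pos_iff.mpr hc
  have hd1 : 1 ≤ d.length := List.length_pos_iff.mpr hd
  ext x
  simp only [compPeaks, Finset.mem_union, Finset.mem_image, Finset.mem_range,
    Finset.mem_singleton, List.length_append]
  constructor
  · rintro ⟨i, hi, rfl⟩
    by_cases h : i + 1 ≤ c.length
    · rw [List.take_append_of_le_length h]
      by_cases h2 : i + 1 = c.length
      · left; right
        rw [h2, List.take_length]
      · left; left
        exact ⟨i, by omega, rfl⟩
    · right
      have hkey : i - c.length < d.length - 1 := by omega
      have h1 : c.length ≤ i + 1 := by omega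
      have h2 : i + 1 - c.length = i - c.length + 1 := by omega
      refine ⟨(d.take (i - c.length + 1)).sum, ⟨i - c.length, hkey, rfl⟩, ?_⟩
      rw [List.take_append, List.take_of_length_le h1, List.sum_append, h2]
  · rintro ((⟨i, hi, rfl⟩ | rfl) | ⟨s, ⟨j, hj, rfl⟩, rfl⟩)
    · have hkey : i < c.length + d.length - 1 := by omega
      have h1 : i + 1 ≤ c.length := by omega
      exact ⟨i, hkey, by rw [List.take_append_of_le_length h1]⟩
    · have hkey : c.length - 1 < c.length + d.length - 1 := by omega
      have h1 : c.length - 1 + 1 ≤ c.length := by omega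
      refine ⟨c.length - 1, hkey, ?_⟩
      rw [List.take_append_of_le_length h1, show c.length - 1 + 1 = c.length by omega,
        List.take_length]
    · have hkey : c.length + j < c.length + d.length - 1 := by omega
      have h1 : c.length ≤ c.length + j + 1 := by omega
      have h2 : c.length + j + 1 - c.length = j + 1 := by omega
      refine ⟨c.length + j, hkey, ?_⟩
      rw [List.take_append, List.take_of_length_le h1, List.sum_append, h2]

lemma IniCount_eq (c : List ℕ) (b : ℕ) :
    IniCount c b = Nat.card (IniS c.sum (compPeaks c) b) := rfl

end Wrapper

end CompIni

open CompIni

theorem comparison_ini (n : ℕ) (hn : 1 ≤ n) (c c' : List ℕ)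
    (hc : IsComposition n c) (hc' : IsComposition n c')
    (hle : ∀ b ∈ Finset.Icc 1 n, IniCount c b ≤ IniCount c' b)
    (hlt : ∃ b ∈ Finset.Icc 1 n, IniCount c b < IniCount c' b) :
    ∀ d : List ℕ, d ≠ [] → (∀ x ∈ d, 0 < x) →
      0 < Pcomp (c ++ d) →
      Pcomp (c ++ d) < Pcomp (c' ++ d) ∧ ¬ IsMaximal (c ++ d) := by
  intro d hd hdpos hposP
  obtain ⟨hcpos, hcsum⟩ := hc
  obtain ⟨hc'pos, hc'sum⟩ := hc'
  have hcne : c ≠ [] := by rintro rfl; simp at hcsum; omega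
  have hc'ne : c' ≠ [] := by rintro rfl; simp at hc'sum; omega
  have hdsum : 1 ≤ d.sum := List.sum_pos d hdpos hd
  have hPc : Pcomp (c ++ d)
      = numPeakSet (n + d.sum) (compPeaks c ∪ {n} ∪ (compPeaks d).image (n + ·)) := by
    simp only [Pcomp]
    rw [List.sum_append, compPeaks_append c d hcne hd, hcsum]
  have hPc' : Pcomp (c' ++ d)
      = numPeakSet (n + d.sum) (compPeaks c' ∪ {n} ∪ (compPeaks d).image (n + ·)) := by
    simp only [Pcomp]
    rw [List.sum_append, compPeaks_append c' d hc'ne hd, hc'sum]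
  have hS : ∀ s ∈ compPeaks c, s < n := by
    intro s hs
    have := sum_take_lt c hcpos hs
    omega
  have hS' : ∀ s ∈ compPeaks c', s < n := by
    intro s hs
    have := sum_take_lt c' hc'pos hs
    omega
  have hle2 : ∀ b, Nat.card (IniS n (compPeaks c) b) ≤ Nat.card (IniS n (compPeaks c') b) := by
    intro b
    by_cases hb : b ∈ Finset.Icc 1 n
    · have h := hle b hb
      rw [IniCount_eq, IniCount_eq, hcsum, hc'sum] at h
      exact h
    · rw [Finset.mem_Icc] at hb
      have hb' : b = 0 ∨ n < b := by omega
      rw [IniS_card_zero _ hb']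
      exact Nat.zero_le _
  have hlt2 : ∃ b, Nat.card (IniS n (compPeaks c) b) < Nat.card (IniS n (compPeaks c') b) := by
    obtain ⟨b, hb, hbl⟩ := hlt
    refine ⟨b, ?_⟩
    rw [IniCount_eq, IniCount_eq, hcsum, hc'sum] at hbl
    exact hbl
  have hmain := core n d.sum hdsum (compPeaks c) (compPeaks c') (compPeaks d) hS hS' hle2 hlt2
    (by rw [← hPc]; exact hposP)
  have hfinal : Pcomp (c ++ d) < Pcomp (c' ++ d) := by
    rw [hPc, hPc']
    exact hmain
  refine ⟨hfinal, ?_⟩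
  intro hmax
  have hcomp : IsComposition (c ++ d).sum (c' ++ d) := by
    constructor
    · intro x hx
      rcases List.mem_append.mp hx with h | h
      exacts [hc'pos x h, hdpos x h]
    · rw [List.sum_append, List.sum_append, hcsum, hc'sum]
  have hcontra := hmax (c' ++ d) hcomp
  omega
end
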